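/- arXiv:2209.09668 — 5 statements merged into one kernel-verified Lean document; each statement's English description precedes it below -/
import Mathlib

section
/- Let f : 2^N → ℝ≥0 be a normalized, monotone, submodular function with curvature c ∈ [0,1]. Then for all disjoint sets A, B ⊆ N, we have f(A ∪ B) ≥ f(A) + (1-c)·∑_{i∈B} f({i}). -/
open Finset

/-!
Submodularity, applied to `insert j S` and `N.erase j`, shows that the marginal gain of `j` over
any `S ⊆ N \ {j}` is at least its marginal gain over `N \ {j}`, which by definition of the curvature
is at least `(1 - c) f({j})`. Adding the elements of `B` to `A` one at a time and summing these
gains gives the bound.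
-/

section Marginal

variable {ι : Type*} [DecidableEq ι] {N : Finset ι} {f : Finset ι → ℝ}

theorem sub_erase_le_marginal
    (hsub : ∀ A B : Finset ι, A ⊆ N → B ⊆ N → f A + f B ≥ f (A ∪ B) + f (A ∩ B))
    {j : ι} (hj : j ∈ N) {S : Finset ι} (hS : S ⊆ N.erase j) :
    f N - f (N.erase j) ≤ f (insert j S) - f S := by
  have hunion : insert j S ∪ N.erase j = N := by
    rw [insert_union, union_eq_right.mpr hS, insert_erase hj]
  have hinter : insert j S ∩ N.erase j = S := by
    rw [insert_inter_of_notMem (notMem_erase j N), inter_eq_left.mpr hS]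
  have := hsub (insert j S) (N.erase j)
    (insert_subset hj (hS.trans (erase_subset j N))) (erase_subset j N)
  rw [hunion, hinter] at this
  linarith

theorem add_sum_le_of_le_marginal {w : ι → ℝ}
    (hw : ∀ i ∈ N, ∀ S ⊆ N.erase i, w i ≤ f (insert i S) - f S)
    {A B : Finset ι} (hA : A ⊆ N) (hB : B ⊆ N) (hAB : Disjoint A B) :
    f A + ∑ i ∈ B, w i ≤ f (A ∪ B) := by
  induction B using Finset.induction_on with
  | empty => simp
  | @insert i B hiB ih =>
    have hi : i ∈ N := hB (mem_insert_self i B)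
    have hiA : i ∉ A := disjoint_right.mp hAB (mem_insert_self i B)
    have hAB_erase : A ∪ B ⊆ N.erase i :=
      union_subset (subset_erase.mpr ⟨hA, hiA⟩)
        (subset_erase.mpr ⟨(subset_insert i B).trans hB, hiB⟩)
    have hgain := hw i hi (A ∪ B) hAB_erase
    have hprev := ih ((subset_insert i B).trans hB) (hAB.mono_right (subset_insert i B))
    rw [sum_insert hiB, union_insert]
    linarith

theorem one_sub_curvature_mul_le (hN : N.Nonempty) {c : ℝ}
    (hc : c = 1 - N.inf' hN (fun j => (f N - f (N.erase j)) / f {j}))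
    {j : ι} (hj : j ∈ N) (hfj : 0 < f {j}) :
    (1 - c) * f {j} ≤ f N - f (N.erase j) := by
  rw [hc, sub_sub_cancel, ← le_div_iff₀ hfj]
  exact inf'_le (fun j => (f N - f (N.erase j)) / f {j}) hj

end Marginal

theorem curvature_union_bound_general {ι : Type*} [DecidableEq ι]
    (N : Finset ι) (hN : N.Nonempty) (f : Finset ι → ℝ)
    (hsub : ∀ A B : Finset ι, A ⊆ N → B ⊆ N → f A + f B ≥ f (A ∪ B) + f (A ∩ B))
    (hfpos : ∀ j ∈ N, 0 < f {j})
    (c : ℝ)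
    (hc : c = 1 - N.inf' hN (fun j => (f N - f (N.erase j)) / f {j})) :
    ∀ A B : Finset ι, A ⊆ N → B ⊆ N → Disjoint A B →
      f (A ∪ B) ≥ f A + (1 - c) * ∑ i ∈ B, f {i} := by
  intro A B hA hB hAB
  have hgain : ∀ i ∈ N, ∀ S ⊆ N.erase i, (1 - c) * f {i} ≤ f (insert i S) - f S :=
    fun i hi S hS => (one_sub_curvature_mul_le hN hc hi (hfpos i hi)).trans
      (sub_erase_le_marginal hsub hi hS)
  rw [mul_sum]
  exact add_sum_le_of_le_marginal hgain hA hB hAB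

/-- Lemma 1(ii): curvature lower bound for disjoint unions. -/
theorem curvature_union_bound {ι : Type*} [DecidableEq ι]
    (N : Finset ι) (hN : N.Nonempty) (f : Finset ι → ℝ)
    (hnorm : f ∅ = 0)
    (hmono : ∀ A B : Finset ι, A ⊆ B → B ⊆ N → f A ≤ f B)
    (hsub : ∀ A B : Finset ι, A ⊆ N → B ⊆ N → f A + f B ≥ f (A ∪ B) + f (A ∩ B))
    (hfpos : ∀ j ∈ N, 0 < f {j})
    (c : ℝ)
    (hc : c = 1 - N.inf' hN (fun j => (f N - f (N.erase j)) / f {j}))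
    (hc0 : 0 ≤ c) (hc1 : c ≤ 1) :
    ∀ A B : Finset ι, A ⊆ N → B ⊆ N → Disjoint A B →
      f (A ∪ B) ≥ f A + (1 - c) * ∑ i ∈ B, f {i} :=
  curvature_union_bound_general N hN f hsub hfpos c hc
end

section
/- Greedy increment bound (Lemma 2(i)): With the setup of the greedy sequence for submodular maximization under a knapsack with capacity γ, curvature c, indicator χ_m = 1 iff i_m ∈ Opt, and s*_{j-1} = s(Opt ∩ G_{j-1}), for all j ∈ {1,…,k+1}: δ_j ≥ (c·s_j/γ)·(f(Opt) - ∑_{m=1}^{j-1} δ_m) + ((1-c)·s_j/(γ - s*_{j-1}))·(f(Opt) - ∑_{m=1}^{j-1} χ_m δ_m). -/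
/-!
Put `A = G_{j-1}` and let `ρ = δ_j / s_j` be the density of the `j`-th greedy choice. By
submodularity, adding `Opt` to `A` gains at most the sum of the single-element gains over
`Opt \ A`, and by the greedy choice each of them is at most `ρ · s(x)`; hence
`f(Opt ∪ A) - f(A) ≤ ρ · (γ - s*_{j-1})`. Curvature bounds `f(Opt ∪ A)` from below: each greedy
element outside `Opt` adds at least `(1 - c)` times its own increment `δ_m` to `Opt`. With
`f(A) = ∑_{m<j} δ_m` this gives
`(1 - c) (f(Opt) - ∑ χ_m δ_m) + c (f(Opt) - ∑ δ_m) ≤ ρ · (γ - s*_{j-1})`, and the claim follows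
because `γ - s*_{j-1} ≤ γ` and `∑_{m<j} δ_m = f(G_{j-1}) ≤ f(Opt)`.
-/

open Finset

def SubmodularOn {ι : Type*} [DecidableEq ι] (N : Finset ι) (f : Finset ι → ℝ) : Prop :=
  ∀ A B : Finset ι, A ⊆ N → B ⊆ N → f A + f B ≥ f (A ∪ B) + f (A ∩ B)

namespace SubmodularOn

variable {ι : Type*} [DecidableEq ι] {N A B S : Finset ι} {f : Finset ι → ℝ} {x : ι}

theorem gain_antitone (hf : SubmodularOn N f) (hAB : A ⊆ B) (hB : B ⊆ N) (hx : x ∈ N)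
    (hxB : x ∉ B) : f (insert x B) - f B ≤ f (insert x A) - f A := by
  have h := hf (insert x A) B (insert_subset hx (hAB.trans hB)) hB
  rw [insert_union, union_eq_right.mpr hAB, insert_inter_of_notMem hxB,
    inter_eq_left.mpr hAB] at h
  linarith

theorem gain_le_singleton (hf : SubmodularOn N f) (hf0 : f ∅ = 0) (hA : A ⊆ N) (hx : x ∈ N)
    (hxA : x ∉ A) : f (insert x A) - f A ≤ f {x} := by
  simpa [hf0] using hf.gain_antitone (empty_subset A) hA hx hxA

theorem sub_le_sum_gain (hf : SubmodularOn N f) (hS : S ⊆ N) (hA : A ⊆ N) :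
    f (A ∪ S) - f A ≤ ∑ x ∈ S \ A, (f (insert x A) - f A) := by
  induction S using Finset.induction_on with
  | empty => simp
  | @insert x S hxS ih =>
    have ih := ih ((subset_insert x S).trans hS)
    by_cases hxA : x ∈ A
    · rwa [union_insert, insert_eq_self.mpr (mem_union_left S hxA), insert_sdiff_of_mem S hxA]
    · have hgain := hf.gain_antitone subset_union_left
        (union_subset hA ((subset_insert x S).trans hS)) (hS (mem_insert_self x S))
        (by simp [hxA, hxS])
      rw [union_insert, insert_sdiff_of_notMem S hxA,
        sum_insert fun h => hxS (mem_sdiff.mp h).1]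
      linarith

theorem sub_le_mul_sum_of_density_le (hf : SubmodularOn N f) (hS : S ⊆ N) (hA : A ⊆ N)
    {s : ι → ℝ} (hs : ∀ x ∈ S, 0 < s x) {ρ : ℝ}
    (hρ : ∀ x ∈ S \ A, (f (insert x A) - f A) / s x ≤ ρ) :
    f (A ∪ S) - f A ≤ ρ * ∑ x ∈ S \ A, s x := by
  refine (hf.sub_le_sum_gain hS hA).trans ?_
  rw [mul_sum]
  exact sum_le_sum fun x hx => (div_le_iff₀ (hs x (mem_sdiff.mp hx).1)).mp (hρ x hx)

theorem one_sub_mul_le_gain (hf : SubmodularOn N f) (hN : N.Nonempty) {c : ℝ}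
    (hc : c = 1 - N.inf' hN (fun y => (f N - f (N.erase y)) / f {y})) (hx : x ∈ N)
    (hfx : 0 < f {x}) (hA : A ⊆ N) (hxA : x ∉ A) :
    (1 - c) * f {x} ≤ f (insert x A) - f A :=
  calc (1 - c) * f {x} ≤ (f N - f (N.erase x)) / f {x} * f {x} := by
        rw [hc, sub_sub_cancel]
        gcongr
        exact inf'_le _ hx
    _ = f (insert x (N.erase x)) - f (N.erase x) := by
      rw [div_mul_cancel₀ _ hfx.ne', insert_erase hx]
    _ ≤ _ := hf.gain_antitone (subset_erase.mpr ⟨hA, hxA⟩) (erase_subset x N) hx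
      (notMem_erase x N)

end SubmodularOn

theorem sum_Icc_one_sub_pred {M : Type*} [AddCommGroup M] (g : ℕ → M) (u : ℕ) :
    ∑ m ∈ Icc 1 u, (g m - g (m - 1)) = g u - g 0 := by
  induction u with
  | zero => simp
  | succ n ih =>
    rw [sum_Icc_succ_top (by omega), ih, Nat.add_sub_cancel]
    abel

theorem value_eq_sum_increments {ι : Type*} {f : Finset ι → ℝ} {G : ℕ → Finset ι}
    (hf0 : f ∅ = 0) (hG0 : G 0 = ∅) (u : ℕ) :
    f (G u) = ∑ m ∈ Icc 1 u, (f (G m) - f (G (m - 1))) := by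
  rw [sum_Icc_one_sub_pred (fun m => f (G m)), hG0, hf0, sub_zero]

theorem sum_boole_mul_le_sum {α : Type*} {I : Finset α} {p : α → Prop} [DecidablePred p]
    {g : α → ℝ} (hg : ∀ m ∈ I, 0 ≤ g m) :
    ∑ m ∈ I, (if p m then (1 : ℝ) else 0) * g m ≤ ∑ m ∈ I, g m :=
  sum_le_sum fun m hm => by
    rw [boole_mul]
    split_ifs
    exacts [le_rfl, hg m hm]

section Chain

variable {ι : Type*} [DecidableEq ι] {N : Finset ι} {f : Finset ι → ℝ} {G : ℕ → Finset ι}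
  {i : ℕ → ι} {u : ℕ}

theorem chain_subset (hG0 : G 0 = ∅) (hGsucc : ∀ n, G (n + 1) = insert (i (n + 1)) (G n))
    (hi : ∀ n < u, i (n + 1) ∈ N) : G u ⊆ N := by
  induction u with
  | zero => simp [hG0]
  | succ n ih =>
    rw [hGsucc]
    exact insert_subset (hi n n.lt_succ_self) (ih fun m hm => hi m (by omega))

theorem add_mul_sum_le_union (hf : SubmodularOn N f) (hf0 : f ∅ = 0) {κ : ℝ} (hκ0 : 0 ≤ κ)
    (hκ : ∀ x ∈ N, ∀ A ⊆ N, x ∉ A → κ * f {x} ≤ f (insert x A) - f A)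
    (hG0 : G 0 = ∅) (hGsucc : ∀ n, G (n + 1) = insert (i (n + 1)) (G n))
    (hstep : ∀ n < u, i (n + 1) ∈ N \ G n) {S : Finset ι} (hS : S ⊆ N) :
    f S + κ * (∑ m ∈ Icc 1 u, (f (G m) - f (G (m - 1))) -
      ∑ m ∈ Icc 1 u, (if i m ∈ S then (1 : ℝ) else 0) * (f (G m) - f (G (m - 1)))) ≤
      f (S ∪ G u) := by
  rw [← sum_sub_distrib]
  induction u with
  | zero => simp [hG0]
  | succ n ih =>
    obtain ⟨hiN, hiG⟩ := mem_sdiff.mp (hstep n n.lt_succ_self)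
    have ih := ih fun m hm => hstep m (by omega)
    have hGN : G n ⊆ N :=
      chain_subset hG0 hGsucc fun m hm => (mem_sdiff.mp (hstep m (by omega))).1
    rw [sum_Icc_succ_top (by omega), Nat.add_sub_cancel, hGsucc n, union_insert]
    by_cases hiS : i (n + 1) ∈ S
    · simpa [hiS, insert_eq_self.mpr (mem_union_left _ hiS)] using ih
    · have hgain := hκ _ hiN (S ∪ G n) (union_subset hS hGN) (by simp [hiS, hiG])
      have hδ := mul_le_mul_of_nonneg_left (hf.gain_le_singleton hf0 hGN hiN hiG) hκ0
      simp only [hiS, if_false]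
      linarith

theorem curvature_gap_le_density_mul (hf : SubmodularOn N f) (hf0 : f ∅ = 0) {c : ℝ}
    (hc1 : c ≤ 1) (hgain : ∀ x ∈ N, ∀ A ⊆ N, x ∉ A → (1 - c) * f {x} ≤ f (insert x A) - f A)
    (hG0 : G 0 = ∅) (hGsucc : ∀ n, G (n + 1) = insert (i (n + 1)) (G n))
    (hstep : ∀ n < u, i (n + 1) ∈ N \ G n) {S : Finset ι} (hS : S ⊆ N) {s : ι → ℝ}
    (hs : ∀ x ∈ S, 0 < s x) {ρ : ℝ}
    (hρ : ∀ x ∈ S \ G u, (f (insert x (G u)) - f (G u)) / s x ≤ ρ) :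
    (1 - c) * (f S -
        ∑ m ∈ Icc 1 u, (if i m ∈ S then (1 : ℝ) else 0) * (f (G m) - f (G (m - 1)))) +
      c * (f S - ∑ m ∈ Icc 1 u, (f (G m) - f (G (m - 1)))) ≤ ρ * ∑ x ∈ S \ G u, s x := by
  have hGN := chain_subset hG0 hGsucc fun n hn => (mem_sdiff.mp (hstep n hn)).1
  have hcurv := add_mul_sum_le_union hf hf0 (sub_nonneg.mpr hc1) hgain hG0 hGsucc hstep hS
  have hgreedy := hf.sub_le_mul_sum_of_density_le hS hGN hs hρ
  rw [union_comm, ← value_eq_sum_increments hf0 hG0] at hcurv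
  rw [← value_eq_sum_increments hf0 hG0]
  linarith

end Chain

theorem curvature_split_le {c s γ σ D F P Q δ : ℝ} (hc0 : 0 ≤ c) (hc1 : c ≤ 1) (hs : 0 < s)
    (hσ : 0 ≤ σ) (hD : 0 ≤ D) (hσD : σ + D ≤ γ) (hPF : P ≤ F) (hQP : Q ≤ P) (hδ : 0 ≤ δ)
    (h : (1 - c) * (F - Q) + c * (F - P) ≤ δ / s * D) :
    c * s / γ * (F - P) + (1 - c) * s / (γ - σ) * (F - Q) ≤ δ := by
  rcases (show 0 ≤ γ - σ by linarith).eq_or_lt with hd | hd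
  · -- `γ = σ`: the second term is a division by zero, and `h` forces `F = P`.
    rw [show D = 0 by linarith, mul_zero] at h
    have hFP : F = P := by nlinarith [mul_nonneg (sub_nonneg.mpr hc1) (sub_nonneg.mpr hQP)]
    simpa [hFP, ← hd] using hδ
  · calc c * s / γ * (F - P) + (1 - c) * s / (γ - σ) * (F - Q)
        ≤ c * s / (γ - σ) * (F - P) + (1 - c) * s / (γ - σ) * (F - Q) := by
          gcongr
          linarith
      _ = s / (γ - σ) * ((1 - c) * (F - Q) + c * (F - P)) := by ring
      _ ≤ s / (γ - σ) * (δ / s * (γ - σ)) := by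
          gcongr
          exact h.trans (by gcongr; linarith)
      _ = δ := by field_simp

theorem greedy_increment_bound_i_general {ι : Type*} [DecidableEq ι]
    (N : Finset ι) (hN : N.Nonempty) (s : ι → ℝ) (f : Finset ι → ℝ)
    (γ c : ℝ) (k : ℕ) (i : ℕ → ι) (G : ℕ → Finset ι) (Opt : Finset ι)
    (hc0 : 0 ≤ c) (hc1 : c ≤ 1)
    (hspos : ∀ x ∈ N, 0 < s x)
    (hnorm : f ∅ = 0)
    (hmono : ∀ A B : Finset ι, A ⊆ B → B ⊆ N → f A ≤ f B)
    (hsub : ∀ A B : Finset ι, A ⊆ N → B ⊆ N → f A + f B ≥ f (A ∪ B) + f (A ∩ B))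
    (hfpos : ∀ x ∈ N, 0 < f {x})
    (hc : c = 1 - N.inf' hN (fun x => (f N - f (N.erase x)) / f {x}))
    (hG0 : G 0 = ∅)
    (hGsucc : ∀ j : ℕ, G (j + 1) = insert (i (j + 1)) (G j))
    (hmem : ∀ j : ℕ, 1 ≤ j → j ≤ k + 1 → i j ∈ N \ G (j - 1))
    (hGkfit : ∑ x ∈ G k, s x ≤ γ)
    (hgreedy : ∀ j : ℕ, 1 ≤ j → j ≤ k + 1 → ∀ x ∈ N \ G (j - 1), s x ≤ γ →
      (f (insert x (G (j - 1))) - f (G (j - 1))) / s x ≤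
      (f (insert (i j) (G (j - 1))) - f (G (j - 1))) / s (i j))
    (hOptsub : Opt ⊆ N) (hOptfeas : ∑ x ∈ Opt, s x ≤ γ)
    (hOptopt : ∀ B : Finset ι, B ⊆ N → ∑ x ∈ B, s x ≤ γ → f B ≤ f Opt) :
    ∀ j : ℕ, 1 ≤ j → j ≤ k + 1 →
      f (G j) - f (G (j - 1)) ≥
        c * s (i j) / γ *
          (f Opt - ∑ m ∈ Finset.Icc 1 (j - 1), (f (G m) - f (G (m - 1)))) +
        (1 - c) * s (i j) / (γ - ∑ x ∈ Opt ∩ G (j - 1), s x) *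
          (f Opt - ∑ m ∈ Finset.Icc 1 (j - 1),
            (if i m ∈ Opt then (1 : ℝ) else 0) * (f (G m) - f (G (m - 1)))):= by
  intro j hj1 hjk
  obtain ⟨t, rfl⟩ : ∃ t, j = t + 1 := ⟨j - 1, by omega⟩
  simp only [Nat.add_sub_cancel]
  have hstep : ∀ n < k + 1, i (n + 1) ∈ N \ G n := fun n hn => by
    simpa using hmem (n + 1) (by omega) (by omega)
  have hGN : ∀ u ≤ k + 1, G u ⊆ N := fun u hu =>
    chain_subset hG0 hGsucc fun n hn => (mem_sdiff.mp (hstep n (by omega))).1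
  have hGmono : Monotone G := monotone_nat_of_le_succ fun n => hGsucc n ▸ subset_insert _ _
  have hδ : ∀ m ≤ k + 1, 0 ≤ f (G m) - f (G (m - 1)) := fun m hm =>
    sub_nonneg.mpr (hmono _ _ (hGmono (Nat.sub_le m 1)) (hGN m hm))
  have hPOpt : ∑ m ∈ Icc 1 t, (f (G m) - f (G (m - 1))) ≤ f Opt := by
    rw [← value_eq_sum_increments hnorm hG0]
    exact hOptopt _ (hGN t (by omega)) <| (sum_le_sum_of_subset_of_nonneg (hGmono (by omega))
      fun x hx _ => (hspos x (hGN k le_self_add hx)).le).trans hGkfit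
  have hsOpt : ∀ x ∈ Opt, 0 < s x := fun x hx => hspos x (hOptsub hx)
  have hkey := curvature_gap_le_density_mul (u := t) hsub hnorm hc1
    (fun x hx A hA hxA => SubmodularOn.one_sub_mul_le_gain hsub hN hc hx (hfpos x hx) hA hxA)
    hG0 hGsucc (fun n hn => hstep n (by omega)) hOptsub hsOpt fun x hx => by
      obtain ⟨hxOpt, hxG⟩ := mem_sdiff.mp hx
      simpa [← hGsucc] using hgreedy (t + 1) (by omega) hjk x
        (by simpa using ⟨hOptsub hxOpt, hxG⟩)
        ((single_le_sum (fun y hy => (hsOpt y hy).le) hxOpt).trans hOptfeas)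
  exact curvature_split_le hc0 hc1 (hspos _ (mem_sdiff.mp (hstep t (by omega))).1)
    (sum_nonneg fun x hx => (hsOpt x (mem_inter.mp hx).1).le)
    (sum_nonneg fun x hx => (hsOpt x (mem_sdiff.mp hx).1).le)
    ((sum_inter_add_sum_sdiff Opt (G t) s).trans_le hOptfeas) hPOpt
    (sum_boole_mul_le_sum fun m hm => hδ m ((mem_Icc.mp hm).2.trans (by omega)))
    (hδ (t + 1) hjk) hkey

/-- Lemma 2(i): greedy increment bound with curvature split. -/
theorem greedy_increment_bound_i {ι : Type*} [DecidableEq ι]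
    (N : Finset ι) (hN : N.Nonempty) (s : ι → ℝ) (f : Finset ι → ℝ)
    (γ c : ℝ) (k : ℕ) (i : ℕ → ι) (G : ℕ → Finset ι) (Opt : Finset ι)
    (hγ : 0 < γ) (hc0 : 0 ≤ c) (hc1 : c ≤ 1)
    (hspos : ∀ x ∈ N, 0 < s x)
    (hnorm : f ∅ = 0)
    (hmono : ∀ A B : Finset ι, A ⊆ B → B ⊆ N → f A ≤ f B)
    (hsub : ∀ A B : Finset ι, A ⊆ N → B ⊆ N → f A + f B ≥ f (A ∪ B) + f (A ∩ B))
    (hfpos : ∀ x ∈ N, 0 < f {x})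
    (hc : c = 1 - N.inf' hN (fun x => (f N - f (N.erase x)) / f {x}))
    (hG0 : G 0 = ∅)
    (hGsucc : ∀ j : ℕ, G (j + 1) = insert (i (j + 1)) (G j))
    (hmem : ∀ j : ℕ, 1 ≤ j → j ≤ k + 1 → i j ∈ N \ G (j - 1))
    (hfit : ∀ j : ℕ, 1 ≤ j → j ≤ k + 1 → s (i j) ≤ γ)
    (hGkfit : ∑ x ∈ G k, s x ≤ γ)
    (hgreedy : ∀ j : ℕ, 1 ≤ j → j ≤ k + 1 → ∀ x ∈ N \ G (j - 1), s x ≤ γ →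
      (f (insert x (G (j - 1))) - f (G (j - 1))) / s x ≤
      (f (insert (i j) (G (j - 1))) - f (G (j - 1))) / s (i j))
    (hOptsub : Opt ⊆ N) (hOptfeas : ∑ x ∈ Opt, s x ≤ γ)
    (hOptopt : ∀ B : Finset ι, B ⊆ N → ∑ x ∈ B, s x ≤ γ → f B ≤ f Opt)
    (hne : G k ≠ Opt) :
    ∀ j : ℕ, 1 ≤ j → j ≤ k + 1 →
      f (G j) - f (G (j - 1)) ≥
        c * s (i j) / γ *
          (f Opt - ∑ m ∈ Finset.Icc 1 (j - 1), (f (G m) - f (G (m - 1)))) +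
        (1 - c) * s (i j) / (γ - ∑ x ∈ Opt ∩ G (j - 1), s x) *
          (f Opt - ∑ m ∈ Finset.Icc 1 (j - 1),
            (if i m ∈ Opt then (1 : ℝ) else 0) * (f (G m) - f (G (m - 1)))) :=
  greedy_increment_bound_i_general N hN s f γ c k i G Opt hc0 hc1 hspos hnorm hmono hsub hfpos hc
    hG0 hGsucc hmem hGkfit hgreedy hOptsub hOptfeas hOptopt
end

section
/- For the greedy sequence of a submodular knapsack instance with curvature c ∈ (0,1], for all j ∈ {1,…,k}: f(G_j) ≥ (1/c)·(1 - ∏_{m=1}^{j}(1 - c·s_m/γ))·f(Opt). -/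
open Finset

/-!
After `l` greedy steps let `Ψ_l = f(Opt ∪ G_l) - f(G_l)` be the gap still to close and
`u_l = γ - s(Opt ∩ G_l)` the part of the budget `Opt` spends outside `G_l`. Submodularity and the
greedy rule give `s_{l+1} Ψ_l ≤ (f(G_{l+1}) - f(G_l)) u_l`. If `i_{l+1} ∉ Opt`, curvature shows
that the gap shrinks by at most `c` times the gain while `u` stays; if `i_{l+1} ∈ Opt`, the gap
shrinks by exactly the gain, but `u` drops by `s_{l+1}`. A downward induction over `l` then yields
`(1 - ∏_{m=l+1}^{j} (1 - c s_m / u_l)) Ψ_l ≤ c (f(G_j) - f(G_l))`, and `l = 0` is the theorem.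
-/

theorem Finset.one_sub_sum_le_prod_one_sub {ι : Type*} (T : Finset ι) (a : ι → ℝ)
    (h0 : ∀ t ∈ T, 0 ≤ a t) (h1 : ∀ t ∈ T, a t ≤ 1) :
    1 - ∑ t ∈ T, a t ≤ ∏ t ∈ T, (1 - a t) := by
  classical
  induction T using Finset.induction_on with
  | empty => simp
  | insert x T hx ih =>
    rw [sum_insert hx, prod_insert hx]
    have ih := ih (fun t ht => h0 t (mem_insert_of_mem ht))
      (fun t ht => h1 t (mem_insert_of_mem ht))
    have hax := h0 x (mem_insert_self x T)
    have hP : 0 ≤ ∏ t ∈ T, (1 - a t) :=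
      prod_nonneg fun t ht => sub_nonneg.2 (h1 t (mem_insert_of_mem ht))
    have hS : 0 ≤ ∑ t ∈ T, a t := sum_nonneg fun t ht => h0 t (mem_insert_of_mem ht)
    nlinarith [mul_le_mul_of_nonneg_left ih (sub_nonneg.2 (h1 x (mem_insert_self x T)))]

theorem one_sub_mul_le_prod_mul_sub_prod {ι : Type*} (T : Finset ι) (b : ι → ℝ) {c s u : ℝ}
    (hc0 : 0 ≤ c) (hc1 : c ≤ 1) (hs : 0 ≤ s) (hu : 0 < u) (hb : ∀ t ∈ T, 0 < b t)
    (hsum : s + ∑ t ∈ T, b t ≤ u) :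
    (1 - c) * (s / u) ≤
      (∏ t ∈ T, (1 - c * b t / u)) * (1 - c * (s / u)) -
        (1 - s / u) * ∏ t ∈ T, (1 - c * b t / (u - s)) := by
  classical
  induction T using Finset.induction_on with
  | empty => simp only [prod_empty]; linarith
  | insert x T hx ih =>
    rw [sum_insert hx] at hsum
    have hbx := hb x (mem_insert_self x T)
    have hbT : ∀ t ∈ T, 0 < b t := fun t ht => hb t (mem_insert_of_mem ht)
    have hbT_sum : 0 ≤ ∑ t ∈ T, b t := sum_nonneg fun t ht => (hbT t ht).le
    have ih := ih hbT (by linarith)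
    have hus : 0 < u - s := by linarith
    rw [prod_insert hx, prod_insert hx]
    set P := ∏ t ∈ T, (1 - c * b t / u)
    set R := ∏ t ∈ T, (1 - c * b t / (u - s))
    have hR : 1 - c ≤ R := by
      have hα : ∑ t ∈ T, c * b t / (u - s) ≤ c := by
        rw [← sum_div, ← mul_sum, div_le_iff₀ hus]
        nlinarith
      have := one_sub_sum_le_prod_one_sub T (fun t => c * b t / (u - s))
        (fun t ht => div_nonneg (mul_nonneg hc0 (hbT t ht).le) hus.le)
        (fun t ht => by
          rw [div_le_one hus]
          nlinarith [single_le_sum (fun t ht => (hbT t ht).le) ht])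
      linarith
    have hfactor : (1 - s / u) * (1 - c * b x / (u - s)) = 1 - s / u - c * b x / u := by
      field_simp
    have hx0 : 0 ≤ 1 - c * b x / u := by
      rw [sub_nonneg, div_le_one hu]
      nlinarith
    have hw : 0 ≤ s / u * (c * b x / u) := by positivity
    -- by `hfactor`, the difference for `insert x T` is `(1 - c b x / u)` times the one for `T`,
    -- plus `(s / u) (c b x / u) R`
    nlinarith [mul_le_mul_of_nonneg_left ih hx0, mul_le_mul_of_nonneg_left hR hw]

theorem gap_step_of_budget_shrinks {c w Ψ ρ D Pb Pa : ℝ}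
    (hkey : (1 - c) * w ≤ Pb * (1 - c * w) - (1 - w) * Pa) (hprod : 1 - c ≤ Pb * (1 - c * w))
    (hρ : w * Ψ ≤ ρ) (hΨ : 0 ≤ Ψ) (hΨρ : 0 ≤ Ψ - ρ) (ih : (1 - Pa) * (Ψ - ρ) ≤ c * D) :
    (1 - Pb * (1 - c * w)) * Ψ ≤ c * (D + ρ) := by
  rcases le_total (1 - Pa) c with hPa | hPa
  · nlinarith [mul_le_mul_of_nonneg_left hρ (sub_nonneg.2 hPa)]
  · nlinarith [mul_le_mul_of_nonneg_right hPa hΨρ]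

theorem gap_step_of_budget_stays {c w Ψ Ψ' ρ D P : ℝ} (hc : 0 ≤ c) (hP0 : 0 ≤ P) (hP1 : P ≤ 1)
    (hρ : w * Ψ ≤ ρ) (hΨ' : Ψ - c * ρ ≤ Ψ') (ih : (1 - P) * Ψ' ≤ c * D) :
    (1 - P * (1 - c * w)) * Ψ ≤ c * (D + ρ) := by
  nlinarith [mul_le_mul_of_nonneg_left hΨ' (sub_nonneg.2 hP1),
    mul_le_mul_of_nonneg_left hρ (mul_nonneg hc hP0)]

/- `b t` is the size of the `(t+1)`-st greedy item, `x l = f(G_l)`, and `Ψ l`, `u l` are the gap and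
budget of the header; the two alternatives of `hstep` are `i_{t+1} ∈ Opt` and `i_{t+1} ∉ Opt`. -/
theorem one_sub_prod_mul_gap_le {c : ℝ} (hc0 : 0 ≤ c) (hc1 : c ≤ 1) (n : ℕ) (b x Ψ u : ℕ → ℝ)
    (hb : ∀ t < n, 0 < b t) (hbu : ∑ t ∈ range n, b t ≤ u 0) (hΨ : ∀ l ≤ n, 0 ≤ Ψ l)
    (hgreedy : ∀ t < n, b t * Ψ t ≤ (x (t + 1) - x t) * u t)
    (hstep : ∀ t < n, (Ψ (t + 1) = Ψ t - (x (t + 1) - x t) ∧ u (t + 1) = u t - b t) ∨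
      (Ψ t - c * (x (t + 1) - x t) ≤ Ψ (t + 1) ∧ u (t + 1) = u t)) :
    (1 - ∏ t ∈ range n, (1 - c * b t / u 0)) * Ψ 0 ≤ c * (x n - x 0) := by
  induction n generalizing b x Ψ u with
  | zero => simp
  | succ n ih =>
    rw [sum_range_succ'] at hbu
    have hb0 := hb 0 (by omega)
    have hbn : 0 ≤ ∑ t ∈ range n, b (t + 1) :=
      sum_nonneg fun t ht => (hb (t + 1) (by simp at ht; omega)).le
    have hu : 0 < u 0 := by linarith
    have hbu1 : ∑ t ∈ range n, b (t + 1) ≤ u 1 := by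
      rcases hstep 0 (by omega) with ⟨-, h⟩ | ⟨-, h⟩ <;> linarith
    have ih := ih (fun t => b (t + 1)) (fun l => x (l + 1)) (fun l => Ψ (l + 1))
      (fun l => u (l + 1)) (fun t ht => hb (t + 1) (by omega)) hbu1
      (fun l hl => hΨ (l + 1) (by omega)) (fun t ht => hgreedy (t + 1) (by omega))
      (fun t ht => hstep (t + 1) (by omega))
    have hρ : b 0 / u 0 * Ψ 0 ≤ x 1 - x 0 := by
      rw [div_mul_eq_mul_div, div_le_iff₀ hu]; exact hgreedy 0 (by omega)
    have hsum : ∑ t ∈ range (n + 1), c * b t / u 0 ≤ c := by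
      rw [← sum_div, ← mul_sum, div_le_iff₀ hu, sum_range_succ']
      nlinarith
    have hfactor : ∀ t ∈ range (n + 1), 0 ≤ c * b t / u 0 ∧ c * b t / u 0 ≤ 1 := by
      have hnonneg : ∀ t ∈ range (n + 1), 0 ≤ c * b t / u 0 := fun t ht =>
        div_nonneg (mul_nonneg hc0 (hb t (by simpa using ht)).le) hu.le
      exact fun t ht => ⟨hnonneg t ht, (single_le_sum hnonneg ht).trans (hsum.trans hc1)⟩
    have hprod := one_sub_sum_le_prod_one_sub _ _ (fun t ht => (hfactor t ht).1)
      (fun t ht => (hfactor t ht).2)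
    rw [prod_range_succ', mul_div_assoc] at hprod ⊢
    rw [show x (n + 1) - x 0 = (x (n + 1) - x 1) + (x 1 - x 0) by ring]
    rcases hstep 0 (by omega) with ⟨hΨ1, hu1⟩ | ⟨hΨ1, hu1⟩
    · rw [hu1, hΨ1] at ih
      refine gap_step_of_budget_shrinks ?_ (by linarith) hρ (hΨ 0 (by omega))
        (hΨ1 ▸ hΨ 1 (by omega)) ih
      exact one_sub_mul_le_prod_mul_sub_prod _ _ hc0 hc1 hb0.le hu
        (fun t ht => hb (t + 1) (by simp at ht; omega)) (by linarith)
    · rw [hu1] at ih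
      have hmem : ∀ t ∈ range n, t + 1 ∈ range (n + 1) := fun t ht => by simp at ht ⊢; omega
      exact gap_step_of_budget_stays hc0
        (prod_nonneg fun t ht => sub_nonneg.2 (hfactor _ (hmem t ht)).2)
        (prod_le_one (fun t ht => sub_nonneg.2 (hfactor _ (hmem t ht)).2)
          fun t ht => sub_le_self _ (hfactor _ (hmem t ht)).1) hρ hΨ1 ih

section SetFunction

variable {ι : Type*} [DecidableEq ι] {N : Finset ι} {f : Finset ι → ℝ}

theorem marginal_antitone_of_submodular
    (hsub : ∀ A B : Finset ι, A ⊆ N → B ⊆ N → f A + f B ≥ f (A ∪ B) + f (A ∩ B))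
    {A B : Finset ι} {x : ι} (hAB : A ⊆ B) (hBN : B ⊆ N) (hx : x ∈ N) (hxB : x ∉ B) :
    f (insert x B) - f B ≤ f (insert x A) - f A := by
  have h := hsub (insert x A) B (insert_subset hx (hAB.trans hBN)) hBN
  rw [insert_union, union_eq_right.2 hAB, insert_inter_of_notMem hxB, inter_eq_left.2 hAB] at h
  linarith

theorem union_sub_le_sum_marginal_of_submodular
    (hsub : ∀ A B : Finset ι, A ⊆ N → B ⊆ N → f A + f B ≥ f (A ∪ B) + f (A ∩ B))
    {B T : Finset ι} (hBN : B ⊆ N) (hTN : T ⊆ N) (hTB : Disjoint T B) :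
    f (T ∪ B) - f B ≤ ∑ x ∈ T, (f (insert x B) - f B) := by
  induction T using Finset.induction_on with
  | empty => simp
  | insert x T hxT ih =>
    rw [insert_subset_iff] at hTN
    rw [disjoint_insert_left] at hTB
    have hx : x ∉ T ∪ B := by simp [hxT, hTB.1]
    have := marginal_antitone_of_submodular hsub subset_union_right (union_subset hTN.2 hBN)
      hTN.1 hx
    rw [insert_union, sum_insert hxT]
    linarith [ih hTN.2 hTB.2]

theorem marginal_le_singleton_of_submodular
    (hsub : ∀ A B : Finset ι, A ⊆ N → B ⊆ N → f A + f B ≥ f (A ∪ B) + f (A ∩ B))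
    (hnorm : f ∅ = 0) {B : Finset ι} {x : ι} (hBN : B ⊆ N) (hx : x ∈ N) (hxB : x ∉ B) :
    f (insert x B) - f B ≤ f {x} := by
  simpa [hnorm] using marginal_antitone_of_submodular hsub (empty_subset B) hBN hx hxB

theorem one_sub_mul_le_marginal_top_of_curvature (hN : N.Nonempty) (hfpos : ∀ x ∈ N, 0 < f {x})
    {c : ℝ} (hc : c = 1 - N.inf' hN (fun x => (f N - f (N.erase x)) / f {x})) {x : ι}
    (hx : x ∈ N) : (1 - c) * f {x} ≤ f N - f (N.erase x) := by
  rw [← le_div_iff₀ (hfpos x hx), hc, sub_sub_cancel]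
  exact inf'_le _ hx

theorem one_sub_mul_le_marginal_of_curvature
    (hsub : ∀ A B : Finset ι, A ⊆ N → B ⊆ N → f A + f B ≥ f (A ∪ B) + f (A ∩ B)) {c : ℝ}
    (hcurv : ∀ x ∈ N, (1 - c) * f {x} ≤ f N - f (N.erase x))
    {B : Finset ι} {x : ι} (hBN : B ⊆ N) (hx : x ∈ N) (hxB : x ∉ B) :
    (1 - c) * f {x} ≤ f (insert x B) - f B := by
  have := marginal_antitone_of_submodular hsub (subset_erase.2 ⟨hBN, hxB⟩) (erase_subset x N) hx
    (notMem_erase x N)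
  rw [insert_erase hx] at this
  linarith [hcurv x hx]

theorem size_mul_gap_le_gain_mul_budget
    (hsub : ∀ A B : Finset ι, A ⊆ N → B ⊆ N → f A + f B ≥ f (A ∪ B) + f (A ∩ B))
    (hmono : ∀ A B : Finset ι, A ⊆ B → B ⊆ N → f A ≤ f B) {s : ι → ℝ}
    (hspos : ∀ x ∈ N, 0 < s x) {Opt B : Finset ι} {y : ι} {γ : ℝ} (hOptN : Opt ⊆ N)
    (hBN : B ⊆ N) (hy : y ∈ N) (hOpt : ∑ x ∈ Opt, s x ≤ γ)
    (hdens : ∀ x ∈ Opt \ B, (f (insert x B) - f B) / s x ≤ (f (insert y B) - f B) / s y) :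
    s y * (f (Opt ∪ B) - f B) ≤ (f (insert y B) - f B) * (γ - ∑ x ∈ Opt ∩ B, s x) := by
  set δ := (f (insert y B) - f B) / s y
  have hδ : 0 ≤ δ :=
    div_nonneg (sub_nonneg.2 (hmono _ _ (subset_insert y B) (insert_subset hy hBN))) (hspos y hy).le
  have hgap : f (Opt ∪ B) - f B ≤ δ * ∑ x ∈ Opt \ B, s x :=
    calc f (Opt ∪ B) - f B = f (Opt \ B ∪ B) - f B := by rw [sdiff_union_self_eq_union]
      _ ≤ ∑ x ∈ Opt \ B, (f (insert x B) - f B) :=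
        union_sub_le_sum_marginal_of_submodular hsub hBN (sdiff_subset.trans hOptN)
          sdiff_disjoint
      _ ≤ ∑ x ∈ Opt \ B, δ * s x := sum_le_sum fun x hx =>
        (div_le_iff₀ (hspos x (hOptN (mem_sdiff.1 hx).1))).1 (hdens x hx)
      _ = δ * ∑ x ∈ Opt \ B, s x := (mul_sum _ _ _).symm
  have hbudget : ∑ x ∈ Opt \ B, s x ≤ γ - ∑ x ∈ Opt ∩ B, s x := by
    linarith [sum_inter_add_sum_sdiff Opt B s]
  calc s y * (f (Opt ∪ B) - f B) ≤ s y * (δ * (γ - ∑ x ∈ Opt ∩ B, s x)) :=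
        mul_le_mul_of_nonneg_left (hgap.trans (mul_le_mul_of_nonneg_left hbudget hδ))
          (hspos y hy).le
    _ = (f (insert y B) - f B) * (γ - ∑ x ∈ Opt ∩ B, s x) := by
        rw [div_mul_eq_mul_div]; field_simp [(hspos y hy).ne']

theorem gap_budget_insert
    (hsub : ∀ A B : Finset ι, A ⊆ N → B ⊆ N → f A + f B ≥ f (A ∪ B) + f (A ∩ B))
    (hnorm : f ∅ = 0) {c : ℝ} (hc1 : c ≤ 1)
    (hcurv : ∀ x ∈ N, (1 - c) * f {x} ≤ f N - f (N.erase x)) (s : ι → ℝ) (γ : ℝ)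
    {Opt B : Finset ι} {y : ι} (hOptN : Opt ⊆ N) (hBN : B ⊆ N) (hy : y ∈ N) (hyB : y ∉ B) :
    (f (Opt ∪ insert y B) - f (insert y B) = f (Opt ∪ B) - f B - (f (insert y B) - f B) ∧
      γ - ∑ x ∈ Opt ∩ insert y B, s x = γ - ∑ x ∈ Opt ∩ B, s x - s y) ∨
    (f (Opt ∪ B) - f B - c * (f (insert y B) - f B) ≤ f (Opt ∪ insert y B) - f (insert y B) ∧
      γ - ∑ x ∈ Opt ∩ insert y B, s x = γ - ∑ x ∈ Opt ∩ B, s x) := by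
  by_cases hyOpt : y ∈ Opt
  · refine Or.inl ⟨?_, ?_⟩
    · rw [union_insert, insert_eq_of_mem (mem_union_left B hyOpt)]
      ring
    · rw [inter_insert_of_mem hyOpt, sum_insert fun h => hyB (mem_inter.1 h).2]
      ring
  · refine Or.inr ⟨?_, by rw [inter_insert_of_notMem hyOpt]⟩
    have hgain := marginal_le_singleton_of_submodular hsub hnorm hBN hy hyB
    have hloss := one_sub_mul_le_marginal_of_curvature hsub hcurv (union_subset hOptN hBN) hy
      (by simp [hyOpt, hyB])
    rw [union_insert]
    nlinarith [mul_le_mul_of_nonneg_left hgain (sub_nonneg.2 hc1)]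

theorem greedy_subset {G : ℕ → Finset ι} {i : ℕ → ι} {n : ℕ} (hG0 : G 0 = ∅)
    (hGsucc : ∀ t, G (t + 1) = insert (i (t + 1)) (G t)) (hmem : ∀ t < n, i (t + 1) ∈ N) :
    ∀ t ≤ n, G t ⊆ N := by
  intro t ht
  induction t with
  | zero => simp [hG0]
  | succ t ih => rw [hGsucc]; exact insert_subset (hmem t (by omega)) (ih (by omega))

theorem sum_range_size_greedy_le {G : ℕ → Finset ι} {i : ℕ → ι} {n : ℕ} {s : ι → ℝ} {γ : ℝ}
    (hG0 : G 0 = ∅) (hGsucc : ∀ t, G (t + 1) = insert (i (t + 1)) (G t))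
    (hspos : ∀ x ∈ N, 0 < s x) (hstep : ∀ t < n, i (t + 1) ∈ N ∧ i (t + 1) ∉ G t)
    (hfit : ∑ x ∈ G n, s x ≤ γ) {j : ℕ} (hj : j ≤ n) :
    ∑ t ∈ range j, s (i (t + 1)) ≤ γ := by
  have hsum : ∀ t ≤ n, ∑ x ∈ G t, s x = ∑ m ∈ range t, s (i (m + 1)) := by
    intro t ht
    induction t with
    | zero => simp [hG0]
    | succ t ih =>
      rw [hGsucc, sum_insert (hstep t (by omega)).2, sum_range_succ, ih (by omega), add_comm]
  calc _ ≤ ∑ t ∈ range n, s (i (t + 1)) := sum_le_sum_of_subset_of_nonneg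
        (range_subset_range.2 hj) fun t ht _ => (hspos _ (hstep t (by simpa using ht)).1).le
    _ ≤ γ := hsum n le_rfl ▸ hfit

end SetFunction

theorem greedy_prefix_product_bound_general {ι : Type*} [DecidableEq ι]
    (N : Finset ι) (hN : N.Nonempty) (s : ι → ℝ) (f : Finset ι → ℝ)
    (γ c : ℝ) (k : ℕ) (i : ℕ → ι) (G : ℕ → Finset ι) (Opt : Finset ι)
    (hc0 : 0 < c) (hc1 : c ≤ 1)
    (hspos : ∀ x ∈ N, 0 < s x)
    (hnorm : f ∅ = 0)
    (hmono : ∀ A B : Finset ι, A ⊆ B → B ⊆ N → f A ≤ f B)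
    (hsub : ∀ A B : Finset ι, A ⊆ N → B ⊆ N → f A + f B ≥ f (A ∪ B) + f (A ∩ B))
    (hfpos : ∀ x ∈ N, 0 < f {x})
    (hc : c = 1 - N.inf' hN (fun x => (f N - f (N.erase x)) / f {x}))
    (hG0 : G 0 = ∅)
    (hGsucc : ∀ j : ℕ, G (j + 1) = insert (i (j + 1)) (G j))
    (hmem : ∀ j : ℕ, 1 ≤ j → j ≤ k + 1 → i j ∈ N \ G (j - 1))
    (hGkfit : ∑ x ∈ G k, s x ≤ γ)
    (hgreedy : ∀ j : ℕ, 1 ≤ j → j ≤ k + 1 → ∀ x ∈ N \ G (j - 1), s x ≤ γ →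
      (f (insert x (G (j - 1))) - f (G (j - 1))) / s x ≤
      (f (insert (i j) (G (j - 1))) - f (G (j - 1))) / s (i j))
    (hOptsub : Opt ⊆ N) (hOptfeas : ∑ x ∈ Opt, s x ≤ γ) :
    ∀ j : ℕ, 1 ≤ j → j ≤ k →
      f (G j) ≥ (1 / c) * (1 - ∏ m ∈ Finset.Icc 1 j, (1 - c * s (i m) / γ)) * f Opt := by
  intro j _ hjk
  have hstep : ∀ t < k + 1, i (t + 1) ∈ N ∧ i (t + 1) ∉ G t := fun t ht => by
    simpa using hmem (t + 1) (by omega) (by omega)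
  have hGN := greedy_subset hG0 hGsucc fun t ht => (hstep t ht).1
  have hsize :=
    sum_range_size_greedy_le hG0 hGsucc hspos (fun t ht => hstep t (by omega)) hGkfit hjk
  have hdens : ∀ t < j, ∀ x ∈ Opt \ G t, (f (insert x (G t)) - f (G t)) / s x ≤
      (f (insert (i (t + 1)) (G t)) - f (G t)) / s (i (t + 1)) := fun t ht x hx => by
    simpa using hgreedy (t + 1) (by omega) (by omega) x
      (sdiff_subset_sdiff hOptsub subset_rfl hx)
      ((single_le_sum (fun y hy => (hspos y (hOptsub hy)).le) (mem_sdiff.1 hx).1).trans hOptfeas)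
  have hbound := one_sub_prod_mul_gap_le hc0.le hc1 j (fun t => s (i (t + 1))) (fun l => f (G l))
    (fun l => f (Opt ∪ G l) - f (G l)) (fun l => γ - ∑ x ∈ Opt ∩ G l, s x)
    (fun t ht => hspos _ (hstep t (by omega)).1) (by simpa [hG0] using hsize)
    (fun l hl => sub_nonneg.2 (hmono _ _ subset_union_right
      (union_subset hOptsub (hGN l (by omega)))))
    (fun t ht => by
      rw [hGsucc]
      exact size_mul_gap_le_gain_mul_budget hsub hmono hspos hOptsub (hGN t (by omega))
        (hstep t (by omega)).1 hOptfeas (hdens t ht))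
    (fun t ht => by
      rw [hGsucc]
      exact gap_budget_insert hsub hnorm hc1
        (fun x hx => one_sub_mul_le_marginal_top_of_curvature hN hfpos hc hx) s γ hOptsub
        (hGN t (by omega)) (hstep t (by omega)).1 (hstep t (by omega)).2)
  simp only [hG0, union_empty, inter_empty, sum_empty, hnorm, sub_zero] at hbound
  rw [range_eq_Ico, prod_Ico_add' (fun m => 1 - c * s (i m) / γ) 0 j 1, zero_add,
    Ico_add_one_right_eq_Icc] at hbound
  rw [ge_iff_le, one_div, mul_assoc, inv_mul_le_iff₀ hc0]
  exact hbound

/-- Product form of the greedy prefix bound (Lemma 3 with l = 0). -/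
theorem greedy_prefix_product_bound {ι : Type*} [DecidableEq ι]
    (N : Finset ι) (hN : N.Nonempty) (s : ι → ℝ) (f : Finset ι → ℝ)
    (γ c : ℝ) (k : ℕ) (i : ℕ → ι) (G : ℕ → Finset ι) (Opt : Finset ι)
    (hγ : 0 < γ) (hc0 : 0 < c) (hc1 : c ≤ 1)
    (hspos : ∀ x ∈ N, 0 < s x)
    (hnorm : f ∅ = 0)
    (hmono : ∀ A B : Finset ι, A ⊆ B → B ⊆ N → f A ≤ f B)
    (hsub : ∀ A B : Finset ι, A ⊆ N → B ⊆ N → f A + f B ≥ f (A ∪ B) + f (A ∩ B))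
    (hfpos : ∀ x ∈ N, 0 < f {x})
    (hc : c = 1 - N.inf' hN (fun x => (f N - f (N.erase x)) / f {x}))
    (hG0 : G 0 = ∅)
    (hGsucc : ∀ j : ℕ, G (j + 1) = insert (i (j + 1)) (G j))
    (hmem : ∀ j : ℕ, 1 ≤ j → j ≤ k + 1 → i j ∈ N \ G (j - 1))
    (hfit : ∀ j : ℕ, 1 ≤ j → j ≤ k + 1 → s (i j) ≤ γ)
    (hGkfit : ∑ x ∈ G k, s x ≤ γ)
    (hgreedy : ∀ j : ℕ, 1 ≤ j → j ≤ k + 1 → ∀ x ∈ N \ G (j - 1), s x ≤ γ →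
      (f (insert x (G (j - 1))) - f (G (j - 1))) / s x ≤
      (f (insert (i j) (G (j - 1))) - f (G (j - 1))) / s (i j))
    (hOptsub : Opt ⊆ N) (hOptfeas : ∑ x ∈ Opt, s x ≤ γ)
    (hOptopt : ∀ B : Finset ι, B ⊆ N → ∑ x ∈ B, s x ≤ γ → f B ≤ f Opt)
    (hne : G k ≠ Opt) :
    ∀ j : ℕ, 1 ≤ j → j ≤ k →
      f (G j) ≥ (1 / c) * (1 - ∏ m ∈ Finset.Icc 1 j, (1 - c * s (i m) / γ)) * f Opt :=
  greedy_prefix_product_bound_general N hN s f γ c k i G Opt hc0 hc1 hspos hnorm hmono hsub hfpos hc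
    hG0 hGsucc hmem hGkfit hgreedy hOptsub hOptfeas
end

section
/- Approximation guarantee of AGreedy (Theorem): Let c ∈ (0,1] and let AG be the output of the alternative greedy algorithm (which returns either the maximal greedy prefix G_k fitting the knapsack, or the first non-fitting item {i_{k+1}} — the latter exactly when f(G_k ∪ {i_{k+1}}) - f(G_k) > f(G_k)). Then f(AG) ≥ ((1-x)/(2-(2-c)x))·f(Opt), where x is the unique root in [0,1] of (1/c)(1 - e^{-cz}) = (1-z)/(2-(2-c)z). -/
/-!
Write `δ_{j+1} = f(G_{j+1}) - f(G_j)` (`stepGain f G j`), `S_j = s(G_j)`, `P_j = s(G_j ∩ Opt)`,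
`A_j` for the gain collected on items of `Opt` before step `j`, and
`U_j = f(Opt) - c f(G_j) - (1 - c) A_j`. Submodularity, the greedy choice and curvature (an item
of `G_j` outside `Opt` adds at least `1 - c` times its own gain to `Opt`) give the step bound
`s(i_{j+1}) U_j ≤ (γ - P_j) δ_{j+1}`.

Along the prefix the potential `U_j exp(-c (S_k - S_j) / (γ - P_j)) + (1 - c) A_j` does not
increase, and comparing its values at `k` and `0` gives `c f(G_k) ≥ (1 - e^{-cz}) f(Opt)`. At
`j = k` the step bound and the decreasing densities give
`(1 - z) f(Opt) ≤ (1 - z) f(G_k) + (1 - (1 - c) z) δ_{k+1}`, because `i_{k+1}` is larger than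
`γ - S_k`. AGreedy gets at least `max (f(G_k), δ_{k+1})`: the first bound wins when `z ≥ x`, the
second when `z < x`, since `(1 - z) / (2 - (2 - c) z)` decreases in `z`.
-/

open Finset Real

theorem mul_one_sub_exp_le {s b c δ U : ℝ} (hs : 0 < s) (hb : 0 < b) (hc : 0 ≤ c) (hδ : 0 ≤ δ)
    (h : s * U ≤ b * δ) : U * (1 - exp (-(c * (s / b)))) ≤ c * δ := by
  have he0 : 0 ≤ 1 - exp (-(c * (s / b))) :=
    sub_nonneg.2 (exp_le_one_iff.2 (neg_nonpos.2 (by positivity)))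
  have he1 : 1 - exp (-(c * (s / b))) ≤ c * (s / b) := by
    linarith [add_one_le_exp (-(c * (s / b)))]
  refine le_of_mul_le_mul_left ?_ hs
  calc s * (U * (1 - exp (-(c * (s / b))))) = s * U * (1 - exp (-(c * (s / b)))) := by ring
    _ ≤ b * δ * (1 - exp (-(c * (s / b)))) := mul_le_mul_of_nonneg_right h he0
    _ ≤ b * δ * (c * (s / b)) := mul_le_mul_of_nonneg_left he1 (by positivity)
    _ = s * (c * δ) := by field_simp

theorem sub_mul_exp_le_mul_exp {a b s c δ U : ℝ} (hs : 0 < s) (hb : 0 < b) (hc : 0 ≤ c)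
    (hδ : 0 ≤ δ) (h : s * U ≤ b * δ) :
    (U - c * δ) * exp (-(c * ((a - s) / b))) ≤ U * exp (-(c * (a / b))) := by
  have hsplit : exp (-(c * (a / b))) = exp (-(c * ((a - s) / b))) * exp (-(c * (s / b))) := by
    rw [← exp_add]; congr 1; field_simp; ring
  have := mul_le_mul_of_nonneg_left (mul_one_sub_exp_le hs hb hc hδ h)
    (exp_pos (-(c * ((a - s) / b)))).le
  rw [hsplit]
  linarith

theorem sub_mul_exp_add_le_mul_exp {a b s c δ U : ℝ} (hs : 0 < s) (hsa : s ≤ a) (hab : a ≤ b)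
    (hc0 : 0 ≤ c) (hc1 : c ≤ 1) (hδ : 0 ≤ δ) (h : s * U ≤ b * δ) :
    (U - δ) * exp (-(c * ((a - s) / (b - s)))) + (1 - c) * δ ≤ U * exp (-(c * (a / b))) := by
  have hb : 0 < b := by linarith
  rcases hsa.eq_or_lt with rfl | hsa
  · rw [sub_self, zero_div, mul_zero, neg_zero, exp_zero]
    linarith [mul_one_sub_exp_le hs hb hc0 hδ h]
  have hbs : 0 < b - s := by linarith
  set β := (a - s) / (b - s) with hβ
  have hβ0 : 0 ≤ β := div_nonneg (by linarith) hbs.le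
  have hβ1 : β ≤ 1 := (div_le_one hbs).2 (by linarith)
  set E' := exp (-(c * β))
  set ε := c * (s / b * (1 - β))
  have hε : 0 ≤ ε := by have := sub_nonneg.2 hβ1; positivity
  have hα : a / b = β + s / b * (1 - β) := by rw [hβ]; field_simp; ring
  have hE : exp (-(c * (a / b))) = E' * exp (-ε) := by
    rw [hα, ← exp_add]; congr 1; ring
  have hE'E : E' * exp (-ε) ≤ E' :=
    mul_le_of_le_one_right (exp_pos _).le (exp_le_one_iff.2 (by linarith))
  have hE'c : 1 - c ≤ E' * (1 - c * (1 - β)) := by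
    have h1 : 1 - c * β ≤ E' := by linarith [add_one_le_exp (-(c * β))]
    have h2 : 0 ≤ 1 - c * (1 - β) := by nlinarith
    -- `(1 - cβ)(1 - c + cβ) = 1 - c + c²β(1 - β)`
    calc 1 - c ≤ (1 - c * β) * (1 - c * (1 - β)) := by
          nlinarith [mul_nonneg (mul_nonneg hc0 hc0) (mul_nonneg hβ0 (sub_nonneg.2 hβ1))]
      _ ≤ E' * (1 - c * (1 - β)) := mul_le_mul_of_nonneg_right h1 h2
  have hgap : b * (E' - E' * exp (-ε)) ≤ s * (E' - (1 - c)) := by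
    have h1 : 1 - exp (-ε) ≤ ε := by linarith [add_one_le_exp (-ε)]
    calc b * (E' - E' * exp (-ε)) = E' * b * (1 - exp (-ε)) := by ring
      _ ≤ E' * b * ε := mul_le_mul_of_nonneg_left h1 (by positivity)
      _ = s * (E' * (c * (1 - β))) := by simp only [ε]; field_simp
      _ ≤ s * (E' - (1 - c)) := mul_le_mul_of_nonneg_left (by linarith) hs.le
  rw [hE]
  refine le_of_mul_le_mul_left ?_ hs
  nlinarith [mul_le_mul_of_nonneg_right h (sub_nonneg.2 hE'E), mul_le_mul_of_nonneg_left hgap hδ]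

theorem Finset.sum_range_succ_filter {M : Type*} [AddCommMonoid M] (p : ℕ → Prop)
    [DecidablePred p] (g : ℕ → M) (j : ℕ) :
    ∑ t ∈ range (j + 1) with p t, g t = (∑ t ∈ range j with p t, g t) + if p j then g j else 0 := by
  rw [sum_filter, sum_filter, sum_range_succ]

noncomputable def greedyPotential (c γ F : ℝ) (k : ℕ) (w d : ℕ → ℝ) (p : ℕ → Prop)
    [DecidablePred p] (j : ℕ) : ℝ :=
  (F - c * ∑ t ∈ range j, d t - (1 - c) * ∑ t ∈ range j with p t, d t) *
      exp (-(c * ((∑ t ∈ range k, w t - ∑ t ∈ range j, w t) /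
        (γ - ∑ t ∈ range j with p t, w t)))) +
    (1 - c) * ∑ t ∈ range j with p t, d t

section Potential

variable {c γ F : ℝ} {k : ℕ} {w d : ℕ → ℝ} (p : ℕ → Prop) [DecidablePred p]

theorem greedyPotential_succ_le (hc0 : 0 ≤ c) (hc1 : c ≤ 1) (hw : ∀ t < k, 0 < w t)
    (hd : ∀ t < k, 0 ≤ d t) (hfit : ∑ t ∈ range k, w t ≤ γ)
    (hstep : ∀ j < k, w j * (F - c * ∑ t ∈ range j, d t - (1 - c) * ∑ t ∈ range j with p t, d t)
      ≤ (γ - ∑ t ∈ range j with p t, w t) * d j) {j : ℕ} (hj : j < k) :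
    greedyPotential c γ F k w d p (j + 1) ≤ greedyPotential c γ F k w d p j := by
  have hsa : w j ≤ ∑ t ∈ range k, w t - ∑ t ∈ range j, w t := by
    have : ∑ t ∈ range (j + 1), w t ≤ ∑ t ∈ range k, w t :=
      sum_le_sum_of_subset_of_nonneg (range_subset_range.2 hj)
        fun t ht _ => (hw t (mem_range.1 ht)).le
    rw [sum_range_succ] at this
    linarith
  have hab : ∑ t ∈ range k, w t - ∑ t ∈ range j, w t ≤ γ - ∑ t ∈ range j with p t, w t := by
    have : ∑ t ∈ range j with p t, w t ≤ ∑ t ∈ range j, w t :=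
      sum_le_sum_of_subset_of_nonneg (filter_subset _ _)
        fun t ht _ => (hw t (by simp at ht; omega)).le
    linarith
  unfold greedyPotential
  rw [sum_range_succ w, sum_range_succ d, sum_range_succ_filter p w, sum_range_succ_filter p d,
    sub_add_eq_sub_sub]
  split_ifs with hpj
  · have := sub_mul_exp_add_le_mul_exp (hw j hj) hsa hab hc0 hc1 (hd j hj) (hstep j hj)
    rw [sub_add_eq_sub_sub]
    linarith
  · have := sub_mul_exp_le_mul_exp (a := ∑ t ∈ range k, w t - ∑ t ∈ range j, w t) (hw j hj)
      (by linarith [hw j hj]) hc0 (hd j hj) (hstep j hj)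
    simp only [add_zero]
    linarith

theorem one_sub_exp_mul_le_of_step_bound (hc0 : 0 ≤ c) (hc1 : c ≤ 1) (hw : ∀ t < k, 0 < w t)
    (hd : ∀ t < k, 0 ≤ d t) (hfit : ∑ t ∈ range k, w t ≤ γ)
    (hstep : ∀ j < k, w j * (F - c * ∑ t ∈ range j, d t - (1 - c) * ∑ t ∈ range j with p t, d t)
      ≤ (γ - ∑ t ∈ range j with p t, w t) * d j) :
    (1 - exp (-(c * ((∑ t ∈ range k, w t) / γ)))) * F ≤ c * ∑ t ∈ range k, d t := by
  have hmono : greedyPotential c γ F k w d p k ≤ greedyPotential c γ F k w d p 0 :=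
    antitoneOn_of_add_one_le Set.ordConnected_Iic
      (fun j _ _ hj => greedyPotential_succ_le p hc0 hc1 hw hd hfit hstep hj)
      (Set.mem_Iic.2 (Nat.zero_le k)) Set.self_mem_Iic (Nat.zero_le k)
  simp only [greedyPotential, sub_self, zero_div, mul_zero, neg_zero, exp_zero, range_zero,
    sum_empty, filter_empty, sub_zero] at hmono
  linarith

theorem one_sub_mul_le_of_step_bound (hc0 : 0 ≤ c) (hc1 : c ≤ 1) (hγ : 0 < γ)
    (hw : ∀ t ≤ k, 0 < w t) (hdk : 0 ≤ d k) (hdens : ∀ t ≤ k, d k / w k ≤ d t / w t)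
    (hfit : ∑ t ∈ range k, w t ≤ γ) (hnofit : γ < ∑ t ∈ range k, w t + w k)
    (hstep : w k * (F - c * ∑ t ∈ range k, d t - (1 - c) * ∑ t ∈ range k with p t, d t)
      ≤ (γ - ∑ t ∈ range k with p t, w t) * d k) :
    (1 - (∑ t ∈ range k, w t) / γ) * F ≤ (1 - (∑ t ∈ range k, w t) / γ) * ∑ t ∈ range k, d t +
      (1 - (1 - c) * ((∑ t ∈ range k, w t) / γ)) * d k := by
  set S := ∑ t ∈ range k, w t
  set ρ := d k / w k
  have hwk := hw k le_rfl
  have hρ : 0 ≤ ρ := div_nonneg hdk hwk.le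
  have hS : 0 ≤ S := sum_nonneg fun t ht => (hw t (mem_range.1 ht).le).le
  have hP : 0 ≤ ∑ t ∈ range k with p t, w t :=
    sum_nonneg fun t ht => (hw t (mem_range.1 (mem_filter.1 ht).1).le).le
  have hnot : (∑ t ∈ range k with ¬p t, w t) * ρ ≤ ∑ t ∈ range k with ¬p t, d t := by
    rw [sum_mul]
    refine sum_le_sum fun t ht => ?_
    have ht : t ≤ k := (mem_range.1 (mem_filter.1 ht).1).le
    rw [← le_div_iff₀' (hw t ht)]
    exact hdens t ht
  have hρbound : F - c * ∑ t ∈ range k, d t - (1 - c) * ∑ t ∈ range k with p t, d t ≤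
      (γ - ∑ t ∈ range k with p t, w t) * ρ := by
    rw [← mul_div_assoc, le_div_iff₀' hwk]
    exact hstep
  have hF : F ≤ ∑ t ∈ range k, d t + (γ - (1 - c) * S) * ρ := by
    have hd := sum_filter_add_sum_filter_not (range k) p d
    have hw : ∑ t ∈ range k with p t, w t + ∑ t ∈ range k with ¬p t, w t = S :=
      sum_filter_add_sum_filter_not (range k) p w
    rw [← hw]
    nlinarith [mul_nonneg (mul_nonneg hc0 hP) hρ, mul_le_mul_of_nonneg_left hnot (sub_nonneg.2 hc1)]
  have hres : (γ - S) * ρ ≤ d k := by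
    calc (γ - S) * ρ ≤ w k * ρ := by gcongr; linarith
      _ = d k := mul_div_cancel₀ _ hwk.ne'
  have hz : 0 ≤ 1 - (1 - c) * (S / γ) := by
    have : S / γ ≤ 1 := (div_le_one hγ).2 hfit
    nlinarith [div_nonneg hS hγ.le]
  calc (1 - S / γ) * F ≤ (1 - S / γ) * (∑ t ∈ range k, d t + (γ - (1 - c) * S) * ρ) := by
        gcongr
        rw [sub_nonneg, div_le_one hγ]
        exact hfit
    _ = (1 - S / γ) * ∑ t ∈ range k, d t + (1 - (1 - c) * (S / γ)) * ((γ - S) * ρ) := by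
        field_simp
    _ ≤ (1 - S / γ) * ∑ t ∈ range k, d t + (1 - (1 - c) * (S / γ)) * d k := by gcongr

end Potential

theorem ratio_mul_le_of_bounds {c x z F g d a : ℝ} (hc0 : 0 < c) (hc1 : c ≤ 1)
    (hx : x ∈ Set.Icc (0 : ℝ) 1)
    (hroot : 1 / c * (1 - exp (-(c * x))) = (1 - x) / (2 - (2 - c) * x)) (hF : 0 ≤ F)
    (hA : (1 - exp (-(c * z))) * F ≤ c * g)
    (hB : (1 - z) * F ≤ (1 - z) * g + (1 - (1 - c) * z) * d) (hga : g ≤ a) (hda : d ≤ a) :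
    (1 - x) / (2 - (2 - c) * x) * F ≤ a := by
  obtain ⟨hx0, hx1⟩ := hx
  rcases le_or_gt x z with hxz | hzx
  · have hexp : exp (-(c * z)) ≤ exp (-(c * x)) := exp_le_exp.2 (by nlinarith)
    rw [← hroot]
    calc 1 / c * (1 - exp (-(c * x))) * F ≤ 1 / c * ((1 - exp (-(c * z))) * F) := by
          rw [mul_assoc]; gcongr
      _ ≤ 1 / c * (c * g) := by gcongr
      _ = g := by field_simp
      _ ≤ a := hga
  · have hden : 0 < 2 - (2 - c) * z := by nlinarith
    have hAG : (1 - z) * F ≤ (2 - (2 - c) * z) * a := by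
      have h1 : 0 ≤ 1 - (1 - c) * z := by nlinarith
      nlinarith [mul_le_mul_of_nonneg_left hga (by linarith : (0 : ℝ) ≤ 1 - z),
        mul_le_mul_of_nonneg_left hda h1]
    have hmono : (1 - x) / (2 - (2 - c) * x) ≤ (1 - z) / (2 - (2 - c) * z) := by
      rw [div_le_div_iff₀ (by nlinarith) hden]
      nlinarith
    calc (1 - x) / (2 - (2 - c) * x) * F ≤ (1 - z) / (2 - (2 - c) * z) * F := by gcongr
      _ ≤ a := by rw [div_mul_eq_mul_div, div_le_iff₀ hden]; linarith

def IsSubmodularOn {ι : Type*} [DecidableEq ι] (N : Finset ι) (f : Finset ι → ℝ) : Prop :=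
  ∀ A B : Finset ι, A ⊆ N → B ⊆ N → f A + f B ≥ f (A ∪ B) + f (A ∩ B)

namespace IsSubmodularOn

variable {ι : Type*} [DecidableEq ι] {N A B T : Finset ι} {f : Finset ι → ℝ} {x : ι}

theorem marginal_le_marginal (hf : IsSubmodularOn N f) (hAB : A ⊆ B) (hBN : B ⊆ N) (hxN : x ∈ N)
    (hxB : x ∉ B) : f (insert x B) - f B ≤ f (insert x A) - f A := by
  have h := hf (insert x A) B (insert_subset hxN (hAB.trans hBN)) hBN
  rw [insert_union, union_eq_right.2 hAB, insert_inter_of_notMem hxB, inter_eq_left.2 hAB] at h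
  linarith

theorem marginal_le_singleton (hf : IsSubmodularOn N f) (h0 : f ∅ = 0) (hBN : B ⊆ N)
    (hxN : x ∈ N) (hxB : x ∉ B) : f (insert x B) - f B ≤ f {x} := by
  simpa [h0] using hf.marginal_le_marginal (empty_subset B) hBN hxN hxB

theorem le_add_sum_marginal (hf : IsSubmodularOn N f) (hBN : B ⊆ N) (hTN : T ⊆ N) :
    f (B ∪ T) ≤ f B + ∑ x ∈ T, (f (insert x B) - f B) := by
  induction T using Finset.induction_on with
  | empty => simp
  | @insert y T hyT ih =>
    have hTN' : T ⊆ N := (subset_insert y T).trans hTN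
    have hyN : y ∈ N := hTN (mem_insert_self y T)
    rw [union_insert, sum_insert hyT]
    by_cases hy : y ∈ B ∪ T
    · have hyB : y ∈ B := (mem_union.1 hy).resolve_right hyT
      rw [insert_eq_of_mem hy, insert_eq_of_mem hyB, sub_self]
      linarith [ih hTN']
    · linarith [ih hTN', hf.marginal_le_marginal subset_union_left (union_subset hBN hTN') hyN hy]

theorem one_sub_mul_le_marginal (hf : IsSubmodularOn N f) {c : ℝ} (hN : N.Nonempty)
    (hfpos : ∀ y ∈ N, 0 < f {y})
    (hc : c = 1 - N.inf' hN fun y => (f N - f (N.erase y)) / f {y})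
    (hBN : B ⊆ N) (hxN : x ∈ N) (hxB : x ∉ B) : (1 - c) * f {x} ≤ f (insert x B) - f B := by
  have hcurv : (1 - c) * f {x} ≤ f N - f (N.erase x) := by
    rw [← le_div_iff₀ (hfpos x hxN), hc, sub_sub_cancel]
    exact inf'_le _ hxN
  have hmarg := hf.marginal_le_marginal (subset_erase.2 ⟨hBN, hxB⟩) (erase_subset x N) hxN
    (notMem_erase x N)
  rw [insert_erase hxN] at hmarg
  linarith

end IsSubmodularOn

section Greedy

variable {ι : Type*}

def stepGain (f : Finset ι → ℝ) (G : ℕ → Finset ι) (t : ℕ) : ℝ := f (G (t + 1)) - f (G t)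

theorem sum_range_stepGain (f : Finset ι → ℝ) {G : ℕ → Finset ι} (hG0 : G 0 = ∅) (h0 : f ∅ = 0)
    (j : ℕ) : ∑ t ∈ range j, stepGain f G t = f (G j) := by
  have := sum_range_sub (fun t => f (G t)) j
  rwa [hG0, h0, sub_zero] at this

variable [DecidableEq ι]

structure IsDensityGreedy (N : Finset ι) (s : ι → ℝ) (f : Finset ι → ℝ) (γ : ℝ) (k : ℕ)
    (i : ℕ → ι) (G : ℕ → Finset ι) : Prop where
  zero : G 0 = ∅
  succ : ∀ j, G (j + 1) = insert (i (j + 1)) (G j)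
  mem : ∀ j ≤ k, i (j + 1) ∈ N \ G j
  fits : ∀ j ≤ k, s (i (j + 1)) ≤ γ
  greedy : ∀ j ≤ k, ∀ x ∈ N \ G j, s x ≤ γ →
    (f (insert x (G j)) - f (G j)) / s x ≤ (f (G (j + 1)) - f (G j)) / s (i (j + 1))

namespace IsDensityGreedy

variable {N : Finset ι} {s : ι → ℝ} {f : Finset ι → ℝ} {γ c : ℝ} {k : ℕ} {i : ℕ → ι}
  {G : ℕ → Finset ι} {Opt : Finset ι}

theorem mem_ground (hG : IsDensityGreedy N s f γ k i G) {j : ℕ} (hj : j ≤ k) : i (j + 1) ∈ N :=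
  (mem_sdiff.1 (hG.mem j hj)).1

theorem notMem (hG : IsDensityGreedy N s f γ k i G) {j : ℕ} (hj : j ≤ k) : i (j + 1) ∉ G j :=
  (mem_sdiff.1 (hG.mem j hj)).2

theorem subset_succ (hG : IsDensityGreedy N s f γ k i G) (j : ℕ) : G j ⊆ G (j + 1) :=
  hG.succ j ▸ subset_insert _ _

theorem subset_ground (hG : IsDensityGreedy N s f γ k i G) : ∀ j ≤ k + 1, G j ⊆ N
  | 0, _ => by simp [hG.zero]
  | j + 1, hj => by
    rw [hG.succ]
    exact insert_subset (hG.mem_ground (by omega)) (hG.subset_ground j (by omega))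

theorem sum_eq_sum_range {M : Type*} [AddCommMonoid M] (hG : IsDensityGreedy N s f γ k i G)
    (g : ι → M) : ∀ j ≤ k + 1, ∑ x ∈ G j, g x = ∑ t ∈ range j, g (i (t + 1))
  | 0, _ => by simp [hG.zero]
  | j + 1, hj => by
    rw [hG.succ, sum_insert (hG.notMem (by omega)), sum_range_succ, add_comm,
      hG.sum_eq_sum_range g j (by omega)]

theorem sum_inter_eq_sum_range_filter {M : Type*} [AddCommMonoid M]
    (hG : IsDensityGreedy N s f γ k i G) (g : ι → M) (T : Finset ι) {j : ℕ} (hj : j ≤ k + 1) :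
    ∑ x ∈ G j ∩ T, g x = ∑ t ∈ range j with i (t + 1) ∈ T, g (i (t + 1)) := by
  rw [← sum_ite_mem, hG.sum_eq_sum_range _ j hj, sum_filter]

theorem add_one_sub_mul_sum_le (hG : IsDensityGreedy N s f γ k i G) (hf : IsSubmodularOn N f)
    (h0 : f ∅ = 0) (hN : N.Nonempty) (hfpos : ∀ y ∈ N, 0 < f {y})
    (hc : c = 1 - N.inf' hN fun y => (f N - f (N.erase y)) / f {y}) (hc1 : c ≤ 1)
    (hO : Opt ⊆ N) :
    ∀ j ≤ k + 1, f Opt + (1 - c) * ∑ t ∈ range j with i (t + 1) ∉ Opt, stepGain f G t ≤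
      f (Opt ∪ G j) := by
  intro j hj
  induction j with
  | zero => simp [hG.zero]
  | succ j ih =>
    have ih := ih (by omega)
    rw [sum_range_succ_filter, hG.succ, union_insert]
    by_cases hp : i (j + 1) ∈ Opt
    · rw [if_neg (not_not.2 hp), add_zero, insert_eq_of_mem (mem_union_left _ hp)]
      exact ih
    · have hnot : i (j + 1) ∉ Opt ∪ G j := by
        simp [hp, hG.notMem (show j ≤ k by omega)]
      have hgain : stepGain f G j ≤ f {i (j + 1)} := by
        rw [stepGain, hG.succ]
        exact hf.marginal_le_singleton h0 (hG.subset_ground j (by omega))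
          (hG.mem_ground (by omega)) (hG.notMem (by omega))
      have hcurv := hf.one_sub_mul_le_marginal hN hfpos hc
        (union_subset hO (hG.subset_ground j (by omega))) (hG.mem_ground (by omega)) hnot
      rw [if_pos hp]
      linarith [mul_le_mul_of_nonneg_left hgain (sub_nonneg.2 hc1)]

theorem le_add_mul_density (hG : IsDensityGreedy N s f γ k i G) (hf : IsSubmodularOn N f)
    (hs : ∀ x ∈ N, 0 < s x) (hO : Opt ⊆ N) (hOγ : ∑ x ∈ Opt, s x ≤ γ) {j : ℕ} (hj : j ≤ k)
    (hgain : 0 ≤ stepGain f G j) :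
    f (Opt ∪ G j) ≤ f (G j) + (γ - ∑ x ∈ G j ∩ Opt, s x) * (stepGain f G j / s (i (j + 1))) := by
  set ρ := stepGain f G j / s (i (j + 1))
  have hρ : 0 ≤ ρ := div_nonneg hgain (hs _ (hG.mem_ground hj)).le
  have hmarg : ∀ y ∈ Opt \ G j, f (insert y (G j)) - f (G j) ≤ s y * ρ := by
    intro y hy
    obtain ⟨hyO, hyG⟩ := mem_sdiff.1 hy
    have hsy : s y ≤ γ := (single_le_sum (fun x hx => (hs x (hO hx)).le) hyO).trans hOγ
    have := hG.greedy j hj y (mem_sdiff.2 ⟨hO hyO, hyG⟩) hsy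
    rwa [div_le_iff₀ (hs y (hO hyO)), mul_comm] at this
  have hsplit := sum_inter_add_sum_sdiff Opt (G j) s
  calc f (Opt ∪ G j) = f (G j ∪ Opt \ G j) := by rw [union_sdiff_self_eq_union, union_comm]
    _ ≤ f (G j) + ∑ y ∈ Opt \ G j, (f (insert y (G j)) - f (G j)) :=
      hf.le_add_sum_marginal (hG.subset_ground j (by omega)) (sdiff_subset.trans hO)
    _ ≤ f (G j) + ∑ y ∈ Opt \ G j, s y * ρ := by gcongr with y hy; exact hmarg y hy
    _ ≤ f (G j) + (γ - ∑ x ∈ G j ∩ Opt, s x) * ρ := by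
      rw [← sum_mul, inter_comm]
      gcongr
      linarith

theorem step_bound (hG : IsDensityGreedy N s f γ k i G) (hf : IsSubmodularOn N f) (h0 : f ∅ = 0)
    (hN : N.Nonempty) (hfpos : ∀ y ∈ N, 0 < f {y})
    (hc : c = 1 - N.inf' hN fun y => (f N - f (N.erase y)) / f {y}) (hc1 : c ≤ 1)
    (hs : ∀ x ∈ N, 0 < s x) (hO : Opt ⊆ N) (hOγ : ∑ x ∈ Opt, s x ≤ γ) {j : ℕ} (hj : j ≤ k)
    (hgain : 0 ≤ stepGain f G j) :
    s (i (j + 1)) * (f Opt - c * ∑ t ∈ range j, stepGain f G t -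
        (1 - c) * ∑ t ∈ range j with i (t + 1) ∈ Opt, stepGain f G t) ≤
      (γ - ∑ t ∈ range j with i (t + 1) ∈ Opt, s (i (t + 1))) * stepGain f G j := by
  have hcurv := hG.add_one_sub_mul_sum_le hf h0 hN hfpos hc hc1 hO j (by omega)
  have hunion := hG.le_add_mul_density hf hs hO hOγ hj hgain
  rw [hG.sum_inter_eq_sum_range_filter s Opt (by omega), ← sum_range_stepGain f hG.zero h0 j,
    ← mul_div_assoc] at hunion
  have hsplit := sum_filter_add_sum_filter_not (range j) (fun t => i (t + 1) ∈ Opt) (stepGain f G)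
  rw [mul_comm, ← le_div_iff₀ (hs _ (hG.mem_ground hj)), ← hsplit]
  rw [← hsplit] at hunion
  linarith

theorem stepGain_div_le (hG : IsDensityGreedy N s f γ k i G) (hf : IsSubmodularOn N f)
    (hs : ∀ x ∈ N, 0 < s x) {t : ℕ} (ht : t ≤ k) :
    stepGain f G k / s (i (k + 1)) ≤ stepGain f G t / s (i (t + 1)) := by
  have hstep : ∀ u < k,
      stepGain f G (u + 1) / s (i (u + 1 + 1)) ≤ stepGain f G u / s (i (u + 1)) := by
    intro u hu
    have hx : i (u + 1 + 1) ∈ N \ G u :=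
      mem_sdiff.2 ⟨hG.mem_ground hu, fun hx => hG.notMem hu (hG.subset_succ u hx)⟩
    have hmarg := hf.marginal_le_marginal (hG.subset_succ u) (hG.subset_ground (u + 1) (by omega))
      (hG.mem_ground hu) (hG.notMem hu)
    calc stepGain f G (u + 1) / s (i (u + 1 + 1))
        ≤ (f (insert (i (u + 1 + 1)) (G u)) - f (G u)) / s (i (u + 1 + 1)) := by
          rw [stepGain, hG.succ (u + 1)]
          gcongr
          exact (hs _ (hG.mem_ground hu)).le
      _ ≤ stepGain f G u / s (i (u + 1)) := hG.greedy u hu.le _ hx (hG.fits (u + 1) hu)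
  exact antitoneOn_of_add_one_le (f := fun t => stepGain f G t / s (i (t + 1)))
    Set.ordConnected_Iic (fun j _ _ hj => hstep j hj) (Set.mem_Iic.2 ht) Set.self_mem_Iic ht

theorem one_sub_exp_mul_le (hG : IsDensityGreedy N s f γ k i G) (hf : IsSubmodularOn N f)
    (h0 : f ∅ = 0) (hN : N.Nonempty) (hfpos : ∀ y ∈ N, 0 < f {y})
    (hc : c = 1 - N.inf' hN fun y => (f N - f (N.erase y)) / f {y}) (hc0 : 0 ≤ c) (hc1 : c ≤ 1)
    (hs : ∀ x ∈ N, 0 < s x) (hO : Opt ⊆ N) (hOγ : ∑ x ∈ Opt, s x ≤ γ)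
    (hgain : ∀ t ≤ k, 0 ≤ stepGain f G t) (hfit : ∑ x ∈ G k, s x ≤ γ) :
    (1 - exp (-(c * ((∑ x ∈ G k, s x) / γ)))) * f Opt ≤ c * f (G k) := by
  rw [hG.sum_eq_sum_range s k (by omega)] at hfit ⊢
  rw [← sum_range_stepGain f hG.zero h0 k]
  exact one_sub_exp_mul_le_of_step_bound (fun t => i (t + 1) ∈ Opt) hc0 hc1
    (fun t ht => hs _ (hG.mem_ground ht.le)) (fun t ht => hgain t ht.le) hfit
    (fun j hj => hG.step_bound hf h0 hN hfpos hc hc1 hs hO hOγ hj.le (hgain j hj.le))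

theorem one_sub_mul_le (hG : IsDensityGreedy N s f γ k i G) (hf : IsSubmodularOn N f)
    (h0 : f ∅ = 0) (hN : N.Nonempty) (hfpos : ∀ y ∈ N, 0 < f {y})
    (hc : c = 1 - N.inf' hN fun y => (f N - f (N.erase y)) / f {y}) (hc0 : 0 ≤ c) (hc1 : c ≤ 1)
    (hγ : 0 < γ) (hs : ∀ x ∈ N, 0 < s x) (hO : Opt ⊆ N) (hOγ : ∑ x ∈ Opt, s x ≤ γ)
    (hgain : 0 ≤ stepGain f G k) (hfit : ∑ x ∈ G k, s x ≤ γ)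
    (hnofit : γ < ∑ x ∈ G k, s x + s (i (k + 1))) :
    (1 - (∑ x ∈ G k, s x) / γ) * f Opt ≤ (1 - (∑ x ∈ G k, s x) / γ) * f (G k) +
      (1 - (1 - c) * ((∑ x ∈ G k, s x) / γ)) * stepGain f G k := by
  rw [hG.sum_eq_sum_range s k (by omega)] at hfit hnofit ⊢
  rw [← sum_range_stepGain f hG.zero h0 k]
  exact one_sub_mul_le_of_step_bound (fun t => i (t + 1) ∈ Opt) hc0 hc1 hγ
    (fun t ht => hs _ (hG.mem_ground ht)) hgain (fun t ht => hG.stepGain_div_le hf hs ht)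
    hfit hnofit (hG.step_bound hf h0 hN hfpos hc hc1 hs hO hOγ le_rfl hgain)

end IsDensityGreedy

end Greedy

theorem agreedy_approximation_general {ι : Type*} [DecidableEq ι]
    (N : Finset ι) (hN : N.Nonempty) (s : ι → ℝ) (f : Finset ι → ℝ)
    (γ c : ℝ) (k : ℕ) (i : ℕ → ι) (G : ℕ → Finset ι) (Opt AG : Finset ι)
    (hγ : 0 < γ) (hc0 : 0 < c) (hc1 : c ≤ 1)
    (hspos : ∀ x ∈ N, 0 < s x)
    (hnorm : f ∅ = 0)
    (hmono : ∀ A B : Finset ι, A ⊆ B → B ⊆ N → f A ≤ f B)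
    (hsub : ∀ A B : Finset ι, A ⊆ N → B ⊆ N → f A + f B ≥ f (A ∪ B) + f (A ∩ B))
    (hfpos : ∀ x ∈ N, 0 < f {x})
    (hc : c = 1 - N.inf' hN (fun x => (f N - f (N.erase x)) / f {x}))
    (hG0 : G 0 = ∅)
    (hGsucc : ∀ j : ℕ, G (j + 1) = insert (i (j + 1)) (G j))
    (hmem : ∀ j : ℕ, 1 ≤ j → j ≤ k + 1 → i j ∈ N \ G (j - 1))
    (hfit : ∀ j : ℕ, 1 ≤ j → j ≤ k + 1 → s (i j) ≤ γ)
    (hGkfit : ∑ x ∈ G k, s x ≤ γ)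
    (hnofit : γ < (∑ x ∈ G k, s x) + s (i (k + 1)))
    (hgreedy : ∀ j : ℕ, 1 ≤ j → j ≤ k + 1 → ∀ x ∈ N \ G (j - 1), s x ≤ γ →
      (f (insert x (G (j - 1))) - f (G (j - 1))) / s x ≤
      (f (insert (i j) (G (j - 1))) - f (G (j - 1))) / s (i j))
    (hOptsub : Opt ⊆ N) (hOptfeas : ∑ x ∈ Opt, s x ≤ γ)
    (hAG : (f (G k) < f (insert (i (k + 1)) (G k)) - f (G k) ∧ AG = {i (k + 1)}) ∨
           (¬ (f (G k) < f (insert (i (k + 1)) (G k)) - f (G k)) ∧ AG = G k))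
    (x : ℝ) (hx : x ∈ Set.Icc (0 : ℝ) 1)
    (hxroot : (1 / c) * (1 - Real.exp (-(c * x))) = (1 - x) / (2 - (2 - c) * x)) :
    f AG ≥ (1 - x) / (2 - (2 - c) * x) * f Opt := by
  have hf : IsSubmodularOn N f := hsub
  have hG : IsDensityGreedy N s f γ k i G :=
    { zero := hG0
      succ := hGsucc
      mem := fun j _ => by simpa using hmem (j + 1) (by omega) (by omega)
      fits := fun j _ => hfit (j + 1) (by omega) (by omega)
      greedy := fun j _ x hx hxγ => by
        simpa [hGsucc] using hgreedy (j + 1) (by omega) (by omega) x (by simpa using hx) hxγ }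
  have hgain : ∀ t ≤ k, 0 ≤ stepGain f G t := fun t _ =>
    sub_nonneg.2 (hmono _ _ (hG.subset_succ t) (hG.subset_ground (t + 1) (by omega)))
  have hAG' : f (G k) ≤ f AG ∧ stepGain f G k ≤ f AG := by
    rw [stepGain, hGsucc]
    rcases hAG with ⟨hlt, rfl⟩ | ⟨hge, rfl⟩
    · have := hf.marginal_le_singleton hnorm (hG.subset_ground k (by omega))
        (hG.mem_ground le_rfl) (hG.notMem le_rfl)
      exact ⟨by linarith, this⟩
    · exact ⟨le_rfl, not_lt.1 hge⟩
  have hF : 0 ≤ f Opt := hnorm ▸ hmono ∅ Opt (empty_subset _) hOptsub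
  exact ratio_mul_le_of_bounds hc0 hc1 hx hxroot hF
    (hG.one_sub_exp_mul_le hf hnorm hN hfpos hc hc0.le hc1 hspos hOptsub hOptfeas hgain hGkfit)
    (hG.one_sub_mul_le hf hnorm hN hfpos hc hc0.le hc1 hγ hspos hOptsub hOptfeas (hgain k le_rfl)
      hGkfit hnofit) hAG'.1 hAG'.2

/-- Theorem: approximation guarantee of AGreedy. -/
theorem agreedy_approximation {ι : Type*} [DecidableEq ι]
    (N : Finset ι) (hN : N.Nonempty) (s : ι → ℝ) (f : Finset ι → ℝ)
    (γ c : ℝ) (k : ℕ) (i : ℕ → ι) (G : ℕ → Finset ι) (Opt AG : Finset ι)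
    (hγ : 0 < γ) (hc0 : 0 < c) (hc1 : c ≤ 1)
    (hspos : ∀ x ∈ N, 0 < s x)
    (hnorm : f ∅ = 0)
    (hmono : ∀ A B : Finset ι, A ⊆ B → B ⊆ N → f A ≤ f B)
    (hsub : ∀ A B : Finset ι, A ⊆ N → B ⊆ N → f A + f B ≥ f (A ∪ B) + f (A ∩ B))
    (hfpos : ∀ x ∈ N, 0 < f {x})
    (hc : c = 1 - N.inf' hN (fun x => (f N - f (N.erase x)) / f {x}))
    (hG0 : G 0 = ∅)
    (hGsucc : ∀ j : ℕ, G (j + 1) = insert (i (j + 1)) (G j))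
    (hmem : ∀ j : ℕ, 1 ≤ j → j ≤ k + 1 → i j ∈ N \ G (j - 1))
    (hfit : ∀ j : ℕ, 1 ≤ j → j ≤ k + 1 → s (i j) ≤ γ)
    (hGkfit : ∑ x ∈ G k, s x ≤ γ)
    (hnofit : γ < (∑ x ∈ G k, s x) + s (i (k + 1)))
    (hgreedy : ∀ j : ℕ, 1 ≤ j → j ≤ k + 1 → ∀ x ∈ N \ G (j - 1), s x ≤ γ →
      (f (insert x (G (j - 1))) - f (G (j - 1))) / s x ≤
      (f (insert (i j) (G (j - 1))) - f (G (j - 1))) / s (i j))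
    (hOptsub : Opt ⊆ N) (hOptfeas : ∑ x ∈ Opt, s x ≤ γ)
    (hOptopt : ∀ B : Finset ι, B ⊆ N → ∑ x ∈ B, s x ≤ γ → f B ≤ f Opt)
    (hne : G k ≠ Opt)
    (hAG : (f (G k) < f (insert (i (k + 1)) (G k)) - f (G k) ∧ AG = {i (k + 1)}) ∨
           (¬ (f (G k) < f (insert (i (k + 1)) (G k)) - f (G k)) ∧ AG = G k))
    (x : ℝ) (hx : x ∈ Set.Icc (0 : ℝ) 1)
    (hxroot : (1 / c) * (1 - Real.exp (-(c * x))) = (1 - x) / (2 - (2 - c) * x)) :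
    f AG ≥ (1 - x) / (2 - (2 - c) * x) * f Opt :=
  agreedy_approximation_general N hN s f γ c k i G Opt AG hγ hc0 hc1 hspos hnorm hmono hsub hfpos hc
    hG0 hGsucc hmem hfit hGkfit hnofit hgreedy hOptsub hOptfeas hAG x hx hxroot
end

section
/- Indispensable items are larger than their preceding greedy prefix (Lemma (i)): Suppose i_{k+1} is an indispensable item for capacity γ, i.e., in the greedy order i₁,…,i_{k+1} (items chosen by maximal marginal density among items of size ≤ γ), G_k fits the knapsack (s(G_k) ≤ γ), i_{k+1} does not fit (s(G_k) + s_{k+1} > γ), and f(G_k ∪ {i_{k+1}}) - f(G_k) > f(G_k). Then k ≥ 1 and s_{k+1} > ∑_{j=1}^{k} s_j. -/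
/-!
Let `c` be the marginal density of `i_{k+1}` at `G_k`. By submodularity, `i_{k+1}` had density
at least `c` at every earlier prefix `G_{j-1}`, so by the greedy rule the item `i_j` actually
chosen added at least `c * s_j` to `f`. Telescoping gives `f(G_k) ≥ c * ∑_{j ≤ k} s_j`, while
indispensability says `c * s_{k+1} > f(G_k) ≥ 0`. Comparing the two yields
`s_{k+1} > ∑_{j ≤ k} s_j`; and `k ≥ 1` because the single item `i_1` fits the knapsack.
-/

open Finset

theorem sum_Icc_mul_le_sub_of_le_sub {a F : ℕ → ℝ} {c : ℝ} {k : ℕ}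
    (h : ∀ j < k, a (j + 1) * c ≤ F (j + 1) - F j) :
    (∑ j ∈ Icc 1 k, a j) * c ≤ F k - F 0 := by
  induction k with
  | zero => simp
  | succ k ih =>
    rw [sum_Icc_succ_top (by omega), add_mul]
    linarith [ih fun j hj => h j (by omega), h k k.lt_succ_self]

section SetFunction

variable {ι : Type*} [DecidableEq ι] {N : Finset ι} {f : Finset ι → ℝ}

theorem marginal_le_marginal_of_subset
    (hsub : ∀ A B : Finset ι, A ⊆ N → B ⊆ N → f A + f B ≥ f (A ∪ B) + f (A ∩ B))
    {A B : Finset ι} {x : ι} (hAB : A ⊆ B) (hBN : B ⊆ N) (hxN : x ∈ N) (hxB : x ∉ B) :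
    f (insert x B) - f B ≤ f (insert x A) - f A := by
  have h := hsub (insert x A) B (insert_subset hxN (hAB.trans hBN)) hBN
  rw [insert_union, union_eq_right.mpr hAB, insert_inter_of_notMem hxB,
    inter_eq_left.mpr hAB] at h
  linarith

variable {s : ι → ℝ} {k : ℕ} {i : ℕ → ι} {G : ℕ → Finset ι}

theorem greedy_prefix_subset (hG0 : G 0 = ∅)
    (hGsucc : ∀ j : ℕ, G (j + 1) = insert (i (j + 1)) (G j))
    (hmem : ∀ j : ℕ, 1 ≤ j → j ≤ k + 1 → i j ∈ N \ G (j - 1)) :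
    ∀ j ≤ k + 1, G j ⊆ N
  | 0, _ => by simp [hG0]
  | j + 1, hj => by
    rw [hGsucc]
    exact insert_subset (mem_sdiff.mp (hmem (j + 1) (by omega) hj)).1
      (greedy_prefix_subset hG0 hGsucc hmem j (by omega))

theorem density_mul_sum_le_greedy_prefix
    (hspos : ∀ x ∈ N, 0 < s x) (hnorm : f ∅ = 0)
    (hsub : ∀ A B : Finset ι, A ⊆ N → B ⊆ N → f A + f B ≥ f (A ∪ B) + f (A ∩ B))
    (hG0 : G 0 = ∅) (hGsucc : ∀ j : ℕ, G (j + 1) = insert (i (j + 1)) (G j))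
    (hmem : ∀ j : ℕ, 1 ≤ j → j ≤ k + 1 → i j ∈ N \ G (j - 1))
    (hgreedy : ∀ j : ℕ, 1 ≤ j → j ≤ k →
      (f (insert (i (k + 1)) (G (j - 1))) - f (G (j - 1))) / s (i (k + 1)) ≤
      (f (insert (i j) (G (j - 1))) - f (G (j - 1))) / s (i j)) :
    (∑ j ∈ Icc 1 k, s (i j)) * ((f (insert (i (k + 1)) (G k)) - f (G k)) / s (i (k + 1)))
      ≤ f (G k) := by
  have hGmono : Monotone G :=
    monotone_nat_of_le_succ fun j => (hGsucc j).symm ▸ subset_insert _ _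
  have hlast := mem_sdiff.mp (hmem (k + 1) (by omega) le_rfl)
  have hstep : ∀ j < k, s (i (j + 1)) * ((f (insert (i (k + 1)) (G k)) - f (G k)) / s (i (k + 1)))
      ≤ f (G (j + 1)) - f (G j) := by
    intro j hj
    have hsj : 0 < s (i (j + 1)) := hspos _ (mem_sdiff.mp (hmem (j + 1) (by omega) (by omega))).1
    have hdim := marginal_le_marginal_of_subset hsub (hGmono (by omega : j ≤ k))
      (greedy_prefix_subset hG0 hGsucc hmem k (by omega)) hlast.1 hlast.2
    have hchoice := hgreedy (j + 1) (by omega) (by omega)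
    rw [Nat.add_sub_cancel] at hchoice
    rw [hGsucc j, ← le_div_iff₀' hsj]
    exact (div_le_div_of_nonneg_right hdim (hspos _ hlast.1).le).trans hchoice
  simpa [hG0, hnorm] using
    sum_Icc_mul_le_sub_of_le_sub (a := fun j => s (i j)) (F := fun j => f (G j)) hstep

end SetFunction

theorem indispensable_item_large_general {ι : Type*} [DecidableEq ι]
    (N : Finset ι) (s : ι → ℝ) (f : Finset ι → ℝ)
    (γ : ℝ) (k : ℕ) (i : ℕ → ι) (G : ℕ → Finset ι)
    (hspos : ∀ x ∈ N, 0 < s x)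
    (hnorm : f ∅ = 0)
    (hmono : ∀ A B : Finset ι, A ⊆ B → B ⊆ N → f A ≤ f B)
    (hsub : ∀ A B : Finset ι, A ⊆ N → B ⊆ N → f A + f B ≥ f (A ∪ B) + f (A ∩ B))
    (hG0 : G 0 = ∅)
    (hGsucc : ∀ j : ℕ, G (j + 1) = insert (i (j + 1)) (G j))
    (hmem : ∀ j : ℕ, 1 ≤ j → j ≤ k + 1 → i j ∈ N \ G (j - 1))
    (hfit : ∀ j : ℕ, 1 ≤ j → j ≤ k + 1 → s (i j) ≤ γ)
    (hnofit : γ < (∑ x ∈ G k, s x) + s (i (k + 1)))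
    (hgreedy : ∀ j : ℕ, 1 ≤ j → j ≤ k →
      (f (insert (i (k + 1)) (G (j - 1))) - f (G (j - 1))) / s (i (k + 1)) ≤
      (f (insert (i j) (G (j - 1))) - f (G (j - 1))) / s (i j))
    (hindis : f (G k) < f (insert (i (k + 1)) (G k)) - f (G k)) :
    1 ≤ k ∧ s (i (k + 1)) > ∑ j ∈ Finset.Icc 1 k, s (i j) := by
  have hk : 1 ≤ k := by
    by_contra! hk0
    obtain rfl : k = 0 := by omega
    have := hfit 1 le_rfl le_rfl
    simp only [hG0, sum_empty, zero_add] at hnofit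
    linarith
  refine ⟨hk, ?_⟩
  set c := (f (insert (i (k + 1)) (G k)) - f (G k)) / s (i (k + 1))
  have hs : 0 < s (i (k + 1)) := hspos _ (mem_sdiff.mp (hmem (k + 1) (by omega) le_rfl)).1
  have hval : 0 ≤ f (G k) :=
    hnorm ▸ hmono ∅ (G k) (empty_subset _) (greedy_prefix_subset hG0 hGsucc hmem k (by omega))
  have hc : 0 < c := div_pos (hval.trans_lt hindis) hs
  have hlarge : f (G k) < s (i (k + 1)) * c := by rwa [mul_div_cancel₀ _ hs.ne']
  exact lt_of_mul_lt_mul_right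
    ((density_mul_sum_le_greedy_prefix hspos hnorm hsub hG0 hGsucc hmem hgreedy).trans_lt hlarge)
    hc.le

/-- Lemma (i): an indispensable item is larger than its preceding greedy prefix. -/
theorem indispensable_item_large {ι : Type*} [DecidableEq ι]
    (N : Finset ι) (s : ι → ℝ) (f : Finset ι → ℝ)
    (γ : ℝ) (k : ℕ) (i : ℕ → ι) (G : ℕ → Finset ι)
    (hγ : 0 < γ)
    (hspos : ∀ x ∈ N, 0 < s x)
    (hnorm : f ∅ = 0)
    (hmono : ∀ A B : Finset ι, A ⊆ B → B ⊆ N → f A ≤ f B)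
    (hsub : ∀ A B : Finset ι, A ⊆ N → B ⊆ N → f A + f B ≥ f (A ∪ B) + f (A ∩ B))
    (hfpos : ∀ x ∈ N, 0 < f {x})
    (hG0 : G 0 = ∅)
    (hGsucc : ∀ j : ℕ, G (j + 1) = insert (i (j + 1)) (G j))
    (hmem : ∀ j : ℕ, 1 ≤ j → j ≤ k + 1 → i j ∈ N \ G (j - 1))
    (hfit : ∀ j : ℕ, 1 ≤ j → j ≤ k + 1 → s (i j) ≤ γ)
    (hGkfit : ∑ x ∈ G k, s x ≤ γ)
    (hnofit : γ < (∑ x ∈ G k, s x) + s (i (k + 1)))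
    (hgreedy : ∀ j : ℕ, 1 ≤ j → j ≤ k →
      (f (insert (i (k + 1)) (G (j - 1))) - f (G (j - 1))) / s (i (k + 1)) ≤
      (f (insert (i j) (G (j - 1))) - f (G (j - 1))) / s (i j))
    (hindis : f (G k) < f (insert (i (k + 1)) (G k)) - f (G k)) :
    1 ≤ k ∧ s (i (k + 1)) > ∑ j ∈ Finset.Icc 1 k, s (i j) :=
  indispensable_item_large_general N s f γ k i G hspos hnorm hmono hsub hG0 hGsucc hmem hfit hnofit
    hgreedy hindis
end
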